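/- arXiv:1811.01094 — 2 statements merged into one kernel-verified Lean document; each statement's English description precedes it below -/
import Mathlib

section
/- Let C and T be R-categories, let α = (I^g, α^g)_{g∈mor(𝒢)} and β = (J^g, β^g)_{g∈mor(𝒢)} be partial actions of a groupoid 𝒢 on C and T respectively, and suppose (T, β) is a globalization of (C, α) with structural faithful semifunctors φ_e : I^e → J^e. Then the induced global action β_{a(T)} = (a(T)_g, β_g) of 𝒢 on the ring a(T) is a globalization (in the ring sense) of the induced partial action α_{a(C)} = (a(C)_g, α_g) of 𝒢 on a(C), with the ring monomorphisms ψ_e : a(C)_e → a(T)_e induced by φ_e. -/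
open scoped Classical

noncomputable section

universe u u₂ v v' w w'

/-- A one-sorted (algebraic) groupoid: a set `G` of morphisms with a
partially defined multiplication (`comp g h` meaning `d g = r h`), a total
extension `mul` of it, and inversion. -/
structure AlgGroupoid (G : Type u₂) where
  mul : G → G → G
  inv : G → G
  comp : G → G → Prop
  comp_iff : ∀ g h, comp g h ↔ mul (inv g) g = mul h (inv h)
  mul_assoc' : ∀ g h k, comp g h → comp h k → mul (mul g h) k = mul g (mul h k)
  comp_mul_left : ∀ g h k, comp g h → comp h k → comp (mul g h) k
  comp_mul_right : ∀ g h k, comp g h → comp h k → comp g (mul h k)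
  inv_inv' : ∀ g, inv (inv g) = g
  comp_inv_left : ∀ g, comp (inv g) g
  comp_inv_right : ∀ g, comp g (inv g)
  inv_mul_cancel' : ∀ g h, comp g h → mul (inv g) (mul g h) = h
  mul_inv_cancel' : ∀ g h, comp g h → mul (mul g h) (inv h) = g
  inv_mul' : ∀ g h, comp g h → inv (mul g h) = mul (inv h) (inv g)

namespace AlgGroupoid

variable {G : Type u₂}

/-- The domain identity `d g = g⁻¹ g`. -/
def d (𝒢 : AlgGroupoid G) (g : G) : G := 𝒢.mul (𝒢.inv g) g

/-- The range identity `r g = g g⁻¹`. -/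
def r (𝒢 : AlgGroupoid G) (g : G) : G := 𝒢.mul g (𝒢.inv g)

/-- The set of identities `𝒢₀` of the groupoid. -/
def units (𝒢 : AlgGroupoid G) : Set G := {e | ∃ g, e = 𝒢.d g}

/-- A partial action of a groupoid `𝒢` on the subset `X` of the type `Y`:
the data is a family of domains `D g ⊆ X` and a (total extension of a)
family of maps `act g : D g⁻¹ → D g`. -/
def IsPartialActionOn {Y : Type v} (𝒢 : AlgGroupoid G)
    (X : Set Y) (D : G → Set Y) (act : G → Y → Y) : Prop :=
  (∀ g, D g ⊆ X) ∧
  (∀ g, D g ⊆ D (𝒢.r g)) ∧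
  (∀ x ∈ X, ∃ e ∈ 𝒢.units, x ∈ D e) ∧
  (∀ e ∈ 𝒢.units, ∀ x ∈ D e, act e x = x) ∧
  (∀ g, ∀ x ∈ D (𝒢.inv g), act g x ∈ D g) ∧
  (∀ g, ∀ x ∈ D (𝒢.inv g), act (𝒢.inv g) (act g x) = x) ∧
  (∀ g h, 𝒢.comp g h → act g '' (D (𝒢.inv g) ∩ D h) = D g ∩ D (𝒢.mul g h)) ∧
  (∀ g h, 𝒢.comp g h → ∀ x ∈ D (𝒢.inv h),
      act h x ∈ D (𝒢.inv g) ∩ D h → act g (act h x) = act (𝒢.mul g h) x)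

/-- A partial action of a groupoid on (all of) a set `Y`. -/
def IsSetPartialAction {Y : Type v} (𝒢 : AlgGroupoid G)
    (D : G → Set Y) (act : G → Y → Y) : Prop :=
  𝒢.IsPartialActionOn Set.univ D act

/-- A partial set action is global when `α_g ∘ α_h = α_{gh}` (as partially
defined maps) for every composable pair `(g, h)`. -/
def SetActionIsGlobal {Y : Type v} (𝒢 : AlgGroupoid G)
    (D : G → Set Y) (act : G → Y → Y) : Prop :=
  ∀ g h, 𝒢.comp g h →
    D (𝒢.inv (𝒢.mul g h)) = {x ∈ D (𝒢.inv h) | act h x ∈ D (𝒢.inv g)} ∧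
    ∀ x ∈ D (𝒢.inv (𝒢.mul g h)), act g (act h x) = act (𝒢.mul g h) x

end AlgGroupoid
/-- An `R`-semicategory with object type `Ob`: morphism `R`-modules
`Hom y x` (the morphisms *from `x` to `y`*, i.e. `_yC_x`) and an
associative `R`-bilinear composition (no identities required). -/
structure RSemicat (R : Type u) [CommRing R] (Ob : Type v) : Type (max u v (w + 1)) where
  Hom : Ob → Ob → Type w
  [homAdd : ∀ y x, AddCommGroup (Hom y x)]
  [homMod : ∀ y x, Module R (Hom y x)]
  comp : ∀ {z y x : Ob}, Hom z y → Hom y x → Hom z x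
  comp_assoc : ∀ {v z y x : Ob} (f : Hom v z) (g : Hom z y) (h : Hom y x),
      comp (comp f g) h = comp f (comp g h)
  comp_add_left : ∀ {z y x : Ob} (f f' : Hom z y) (g : Hom y x),
      comp (f + f') g = comp f g + comp f' g
  comp_add_right : ∀ {z y x : Ob} (f : Hom z y) (g g' : Hom y x),
      comp f (g + g') = comp f g + comp f g'
  comp_smul_left : ∀ {z y x : Ob} (c : R) (f : Hom z y) (g : Hom y x),
      comp (c • f) g = c • comp f g
  comp_smul_right : ∀ {z y x : Ob} (c : R) (f : Hom z y) (g : Hom y x),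
      comp f (c • g) = c • comp f g

attribute [instance] RSemicat.homAdd RSemicat.homMod

namespace RSemicat

variable {R : Type u} [CommRing R] {Ob : Type v}

theorem comp_zero_left (C : RSemicat.{u, v, w} R Ob) {z y x : Ob} (g : C.Hom y x) :
    C.comp (0 : C.Hom z y) g = 0 := by
  have h := C.comp_add_left (0 : C.Hom z y) 0 g
  rw [add_zero] at h
  exact left_eq_add.mp h

theorem comp_zero_right (C : RSemicat.{u, v, w} R Ob) {z y x : Ob} (f : C.Hom z y) :
    C.comp f (0 : C.Hom y x) = 0 := by
  have h := C.comp_add_right f (0 : C.Hom y x) 0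
  rw [add_zero] at h
  exact left_eq_add.mp h

/-- An ideal of an `R`-semicategory: a family of submodules closed under
composition with arbitrary morphisms on either side. -/
def IsIdeal (C : RSemicat R Ob) (I : ∀ y x : Ob, Submodule R (C.Hom y x)) : Prop :=
  (∀ (z y x : Ob) (u : C.Hom z y) (f : C.Hom y x), f ∈ I y x → C.comp u f ∈ I z x) ∧
  (∀ (z y x : Ob) (f : C.Hom z y) (u : C.Hom y x), f ∈ I z y → C.comp f u ∈ I z x)

/-- `J` is an ideal of the ideal `I`: `J ⊆ I` and `J` is closed under
composition with morphisms of `I` on either side. -/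
def IsIdealIn (C : RSemicat R Ob) (J I : ∀ y x : Ob, Submodule R (C.Hom y x)) : Prop :=
  (∀ y x, J y x ≤ I y x) ∧
  (∀ (z y x : Ob) (u : C.Hom z y) (f : C.Hom y x), u ∈ I z y → f ∈ J y x → C.comp u f ∈ J z x) ∧
  (∀ (z y x : Ob) (f : C.Hom z y) (u : C.Hom y x), f ∈ J z y → u ∈ I y x → C.comp f u ∈ J z x)

/-- `u ∈ _xI_x` is a local identity of the ideal `I` at the object `x`. -/
def IsLocalIdentity (C : RSemicat R Ob) (I : ∀ y x : Ob, Submodule R (C.Hom y x))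
    (x : Ob) (u : C.Hom x x) : Prop :=
  (∀ (y : Ob) (f : C.Hom x y), f ∈ I x y → C.comp u f = f) ∧
  (∀ (y : Ob) (f : C.Hom y x), f ∈ I y x → C.comp f u = f)

/-- `u ∈ _xI_x` is a left local identity of the ideal `I` at the object `x`. -/
def IsLeftLocalIdentity (C : RSemicat R Ob) (I : ∀ y x : Ob, Submodule R (C.Hom y x))
    (x : Ob) (u : C.Hom x x) : Prop :=
  ∀ (y : Ob) (f : C.Hom x y), f ∈ I x y → C.comp u f = f

/-- An `R`-semicategory is an `R`-category when every object has an
identity morphism. -/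
def HasIdentities (C : RSemicat R Ob) : Prop :=
  ∀ x : Ob, ∃ u : C.Hom x x,
    (∀ (y : Ob) (f : C.Hom x y), C.comp u f = f) ∧
    (∀ (y : Ob) (f : C.Hom y x), C.comp f u = f)

end RSemicat

/-- The raw data of a partial action of a groupoid (with morphism type `G`)
on an `R`-semicategory `C`: domains `D₀ g` and (total extensions of) maps
`act₀ g` on objects, a family of submodules `I g` (the ideals `I^g`) and
(total extensions of) maps `act g : I^{g⁻¹} → I^g` on morphisms. -/
structure SemicatActionData (R : Type u) [CommRing R] (G : Type u₂) {Ob : Type v}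
    (C : RSemicat.{u, v, w} R Ob) where
  D₀ : G → Set Ob
  act₀ : G → Ob → Ob
  I : G → ∀ y x : Ob, Submodule R (C.Hom y x)
  act : ∀ (g : G) {y x : Ob}, C.Hom y x → C.Hom (act₀ g y) (act₀ g x)

variable {R : Type u} [CommRing R] {G : Type u₂} {Ob : Type v}

/-- Definition of a partial action of a groupoid `𝒢` on an `R`-semicategory `C`. -/
def IsSemicatPartialAction (𝒢 : AlgGroupoid G) (C : RSemicat.{u, v, w} R Ob)
    (a : SemicatActionData R G C) : Prop :=
  -- (i) a partial action on the set of objects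
  𝒢.IsSetPartialAction a.D₀ a.act₀ ∧
  -- (ii) `_yI^g_x = 0` unless `{y, x} ⊆ C₀^g`
  (∀ (g : G) (y x : Ob), ¬(y ∈ a.D₀ g ∧ x ∈ a.D₀ g) → a.I g y x = ⊥) ∧
  -- `I^g ⊴ I^{r g} ⊴ C`
  (∀ g : G, C.IsIdealIn (a.I g) (a.I (𝒢.r g))) ∧
  (∀ g : G, C.IsIdeal (a.I (𝒢.r g))) ∧
  -- (iii) `α^g : I^{g⁻¹} → I^g` is an isomorphism of `R`-semicategories
  (∀ (g : G) (y x : Ob) (f : C.Hom y x), f ∈ a.I (𝒢.inv g) y x →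
      a.act g f ∈ a.I g (a.act₀ g y) (a.act₀ g x)) ∧
  (∀ (g : G) (y x : Ob) (f f' : C.Hom y x), f ∈ a.I (𝒢.inv g) y x →
      f' ∈ a.I (𝒢.inv g) y x → a.act g (f + f') = a.act g f + a.act g f') ∧
  (∀ (g : G) (y x : Ob) (c : R) (f : C.Hom y x), f ∈ a.I (𝒢.inv g) y x →
      a.act g (c • f) = c • a.act g f) ∧
  (∀ (g : G) (y x : Ob) (f f' : C.Hom y x), f ∈ a.I (𝒢.inv g) y x →
      f' ∈ a.I (𝒢.inv g) y x → a.act g f = a.act g f' → f = f') ∧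
  (∀ g : G, ∀ y ∈ a.D₀ (𝒢.inv g), ∀ x ∈ a.D₀ (𝒢.inv g),
      ∀ k ∈ a.I g (a.act₀ g y) (a.act₀ g x), ∃ f ∈ a.I (𝒢.inv g) y x, a.act g f = k) ∧
  (∀ (g : G) (z y x : Ob) (f : C.Hom z y) (f' : C.Hom y x), f ∈ a.I (𝒢.inv g) z y →
      f' ∈ a.I (𝒢.inv g) y x → a.act g (C.comp f f') = C.comp (a.act g f) (a.act g f')) ∧
  -- (iv) `α^e = id` on `I^e` for identities `e`
  (∀ e ∈ 𝒢.units, ∀ (y x : Ob) (f : C.Hom y x), f ∈ a.I e y x → HEq (a.act e f) f) ∧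
  -- (v)
  (∀ g h : G, 𝒢.comp g h → ∀ (y x : Ob) (f : C.Hom y x),
      f ∈ a.I h y x → f ∈ a.I (𝒢.inv g) y x →
      a.act (𝒢.inv h) f ∈
        a.I (𝒢.inv (𝒢.mul g h)) (a.act₀ (𝒢.inv h) y) (a.act₀ (𝒢.inv h) x)) ∧
  -- (vi) `α^g ∘ α^h = α^{gh}` on `α^{h⁻¹}(I^h ∩ I^{g⁻¹})`
  (∀ g h : G, 𝒢.comp g h → ∀ (y x : Ob) (f : C.Hom y x), f ∈ a.I (𝒢.inv h) y x →
      a.act h f ∈ a.I (𝒢.inv g) (a.act₀ h y) (a.act₀ h x) →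
      HEq (a.act g (a.act h f)) (a.act (𝒢.mul g h) f))

/-- A partial action of a groupoid on an `R`-semicategory is global when
`α^g ∘ α^h = α^{gh}` and `α₀^g ∘ α₀^h = α₀^{gh}` for every composable pair. -/
def SemicatActionIsGlobal (𝒢 : AlgGroupoid G) (C : RSemicat.{u, v, w} R Ob)
    (a : SemicatActionData R G C) : Prop :=
  𝒢.SetActionIsGlobal a.D₀ a.act₀ ∧
  ∀ g h : G, 𝒢.comp g h → ∀ (y x : Ob) (f : C.Hom y x),
    (f ∈ a.I (𝒢.inv (𝒢.mul g h)) y x ↔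
      f ∈ a.I (𝒢.inv h) y x ∧ a.act h f ∈ a.I (𝒢.inv g) (a.act₀ h y) (a.act₀ h x)) ∧
    (f ∈ a.I (𝒢.inv (𝒢.mul g h)) y x → HEq (a.act g (a.act h f)) (a.act (𝒢.mul g h) f))
section Skew

variable (𝒢 : AlgGroupoid G)

/-- The product of homogeneous components in the (possibly non-associative)
partial skew groupoid semicategory `C ∗_α 𝒢`:
for `f ∈ _zI^t_{ty}` and `l ∈ _yI^g_{gx}` the product is
`α^t(α^{t⁻¹}(f) ∘ l) ∈ _zI^{tg}_{(tg)x}` when `(t, g)` is composable and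
`x ∈ C₀^{(tg)⁻¹}`, and `0` otherwise. -/
def skewMul (C : RSemicat.{u, v, w} R Ob) (a : SemicatActionData R G C) (t g : G)
    {z y x : Ob} (f : C.Hom z (a.act₀ t y)) (l : C.Hom y (a.act₀ g x)) :
    C.Hom z (a.act₀ (𝒢.mul t g) x) :=
  if h : 𝒢.comp t g ∧ x ∈ a.D₀ (𝒢.inv (𝒢.mul t g)) ∧
      a.act₀ (𝒢.inv t) (a.act₀ t y) = y ∧ a.act₀ t (a.act₀ (𝒢.inv t) z) = z ∧
      a.act₀ t (a.act₀ g x) = a.act₀ (𝒢.mul t g) x then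
    cast (by rw [h.2.2.2.1, h.2.2.2.2])
      (a.act t (C.comp (cast (by rw [h.2.2.1]) (a.act (𝒢.inv t) f)) l))
  else 0

/-- Associativity of the partial skew groupoid semicategory `C ∗_α 𝒢`:
`(f l) k = f (l k)` on homogeneous components. -/
def SkewAssoc (C : RSemicat.{u, v, w} R Ob) (a : SemicatActionData R G C) : Prop :=
  ∀ (t g h : G) (z y x u : Ob),
    y ∈ a.D₀ (𝒢.inv t) → x ∈ a.D₀ (𝒢.inv g) → u ∈ a.D₀ (𝒢.inv h) →
    ∀ (f : C.Hom z (a.act₀ t y)) (l : C.Hom y (a.act₀ g x)) (k : C.Hom x (a.act₀ h u)),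
      f ∈ a.I t z (a.act₀ t y) → l ∈ a.I g y (a.act₀ g x) → k ∈ a.I h x (a.act₀ h u) →
      HEq (skewMul 𝒢 C a (𝒢.mul t g) h (skewMul 𝒢 C a t g f l) k)
          (skewMul 𝒢 C a t (𝒢.mul g h) f (skewMul 𝒢 C a g h l k))

end Skew

section Algebra

/-- The underlying module of the `R`-algebra `a(C) = ⊕_{x,y ∈ C₀} _yC_x`. -/
abbrev aHom (C : RSemicat.{u, v, w} R Ob) : Type (max v w) :=
  Π₀ p : Ob × Ob, C.Hom p.1 p.2

/-- The multiplication of the `R`-algebra `a(C)`: the matrix product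
induced by the composition of `C`. -/
def aMul (C : RSemicat.{u, v, w} R Ob) (F K : aHom C) : aHom C :=
  DFinsupp.sum F fun p v => DFinsupp.sum K fun q w =>
    if h : p.2 = q.1 then
      DFinsupp.single (⟨p.1, q.2⟩ : Ob × Ob) (C.comp v (cast (by rw [h]) w : C.Hom p.2 q.2))
    else 0

/-- `a(C)_g = ⊕_{x,y} _yI^g_x` as a subset of `a(C)`. -/
def aIdealSet (C : RSemicat.{u, v, w} R Ob) (a : SemicatActionData R G C) (g : G) :
    Set (aHom C) :=
  {F | ∀ p : Ob × Ob, F p ∈ a.I g p.1 p.2}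

/-- The map `a(C)_{g⁻¹} → a(C)_g` induced componentwise by `α^g`. -/
def aAct {C : RSemicat.{u, v, w} R Ob} (a : SemicatActionData R G C) (g : G)
    (F : aHom C) : aHom C :=
  DFinsupp.sum F fun p v =>
    DFinsupp.single (⟨a.act₀ g p.1, a.act₀ g p.2⟩ : Ob × Ob) (a.act g v)

/-- A multiplier `(Rm, Lm)` of the (possibly non-unital) "ring" given by a
multiplication `mul` on the subset `A` of an additive group `M`. -/
def IsMultiplierOn {M : Type*} [AddCommGroup M] (mul : M → M → M) (A : Set M)
    (Rm Lm : M → M) : Prop :=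
  (∀ a ∈ A, Rm a ∈ A) ∧ (∀ a ∈ A, Lm a ∈ A) ∧
  (∀ a ∈ A, ∀ b ∈ A, Rm (a + b) = Rm a + Rm b) ∧
  (∀ a ∈ A, ∀ b ∈ A, Lm (a + b) = Lm a + Lm b) ∧
  (∀ a ∈ A, ∀ b ∈ A, Rm (mul a b) = mul a (Rm b)) ∧
  (∀ a ∈ A, ∀ b ∈ A, Lm (mul a b) = mul (Lm a) b) ∧
  (∀ a ∈ A, ∀ b ∈ A, mul (Rm a) b = mul a (Lm b))

/-- `(L, R)`-associativity: for any two multipliers `(Rm, Lm)` and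
`(Rm', Lm')` one has `Rm ∘ Lm' = Lm' ∘ Rm`. -/
def IsLRAssocOn {M : Type*} [AddCommGroup M] (mul : M → M → M) (A : Set M) : Prop :=
  ∀ Rm Lm Rm' Lm', IsMultiplierOn mul A Rm Lm → IsMultiplierOn mul A Rm' Lm' →
    ∀ a ∈ A, Rm (Lm' a) = Lm' (Rm a)

/-- `J` is a two-sided ideal of the "ring" `I ⊆ M` (with multiplication `mul`). -/
def IsRingIdealPair {M : Type*} [AddCommGroup M] (mul : M → M → M) (J I : Set M) : Prop :=
  J ⊆ I ∧ (0 : M) ∈ J ∧ (∀ a ∈ J, ∀ b ∈ J, a + b ∈ J) ∧ (∀ a ∈ J, -a ∈ J) ∧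
  (∀ a ∈ I, ∀ b ∈ J, mul a b ∈ J ∧ mul b a ∈ J)

/-- A partial action of a groupoid `𝒢` on the (possibly non-unital) ring
`(M, mul)`: ideals `D (r g) ⊴ M`, `D g ⊴ D (r g)` and ring isomorphisms
`act g : D g⁻¹ → D g` satisfying the partial action axioms. -/
def IsRingPartialAction {M : Type*} [AddCommGroup M] (𝒢 : AlgGroupoid G)
    (mul : M → M → M) (D : G → Set M) (act : G → M → M) : Prop :=
  (∀ g, IsRingIdealPair mul (D (𝒢.r g)) Set.univ) ∧
  (∀ g, IsRingIdealPair mul (D g) (D (𝒢.r g))) ∧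
  (∀ g, ∀ x ∈ D (𝒢.inv g), act g x ∈ D g) ∧
  (∀ g, ∀ x ∈ D (𝒢.inv g), act (𝒢.inv g) (act g x) = x) ∧
  (∀ g, ∀ y ∈ D g, ∃ x ∈ D (𝒢.inv g), act g x = y) ∧
  (∀ g, ∀ x ∈ D (𝒢.inv g), ∀ y ∈ D (𝒢.inv g), act g (x + y) = act g x + act g y) ∧
  (∀ g, ∀ x ∈ D (𝒢.inv g), ∀ y ∈ D (𝒢.inv g), act g (mul x y) = mul (act g x) (act g y)) ∧
  (∀ e ∈ 𝒢.units, ∀ x ∈ D e, act e x = x) ∧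
  (∀ g h, 𝒢.comp g h → ∀ x, x ∈ D (𝒢.inv g) → x ∈ D h →
      act (𝒢.inv h) x ∈ D (𝒢.inv (𝒢.mul g h))) ∧
  (∀ g h, 𝒢.comp g h → ∀ x ∈ D (𝒢.inv h), act h x ∈ D (𝒢.inv g) →
      act g (act h x) = act (𝒢.mul g h) x)

/-- A partial ring action is global when `α_g ∘ α_h = α_{gh}` for every
composable pair. -/
def RingActionIsGlobal {M : Type*} (𝒢 : AlgGroupoid G)
    (D : G → Set M) (act : G → M → M) : Prop :=
  ∀ g h, 𝒢.comp g h →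
    (∀ x, x ∈ D (𝒢.inv (𝒢.mul g h)) ↔ x ∈ D (𝒢.inv h) ∧ act h x ∈ D (𝒢.inv g)) ∧
    (∀ x ∈ D (𝒢.inv (𝒢.mul g h)), act g (act h x) = act (𝒢.mul g h) x)

end Algebra
section Globalization

variable {Ob' : Type v'}

/-- Membership in the image ideal `φ(I)` (inside the semicategory `D`),
with the convention that its components vanish away from the image of `ι`. -/
def ImageMem (C : RSemicat.{u, v, w} R Ob) (D : RSemicat.{u, v', w'} R Ob') (ι : Ob → Ob')
    (I : ∀ y x : Ob, Submodule R (C.Hom y x))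
    (φ : ∀ {y x : Ob}, C.Hom y x → D.Hom (ι y) (ι x))
    {z x' : Ob'} (k : D.Hom z x') : Prop :=
  k = 0 ∨ ∃ (y x : Ob) (f : C.Hom y x), f ∈ I y x ∧ ι y = z ∧ ι x = x' ∧ HEq (φ f) k

/-- The data of a (candidate) globalization of a partial action on `C`:
a global action on the semicategory `D`, an inclusion `ι : C₀ → D₀` of object
sets, and semifunctors `φ_e : I^e → J^e` acting as `ι` on objects. -/
structure GlobalizationData (R : Type u) [CommRing R] (G : Type u₂) {Ob : Type v}
    {Ob' : Type v'} (C : RSemicat.{u, v, w} R Ob) (D : RSemicat.{u, v', w'} R Ob') where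
  b : SemicatActionData R G D
  ι : Ob → Ob'
  φ : ∀ (e : G) {y x : Ob}, C.Hom y x → D.Hom (ι y) (ι x)

/-- `(D, β, (φ_e))` is a globalization of the partial groupoid action
`(C, α)` (Definition 3.2 of the paper). -/
def IsGlobalization (𝒢 : AlgGroupoid G) (C : RSemicat.{u, v, w} R Ob)
    (a : SemicatActionData R G C) (D : RSemicat.{u, v', w'} R Ob')
    (gd : GlobalizationData R G C D) : Prop :=
  Function.Injective gd.ι ∧
  -- β is a global action of 𝒢 on D
  IsSemicatPartialAction 𝒢 D gd.b ∧
  SemicatActionIsGlobal 𝒢 D gd.b ∧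
  -- (i) the object-level action β₀ is a globalization of α₀
  (∀ e ∈ 𝒢.units, ∀ x : Ob, x ∈ a.D₀ e ↔ gd.ι x ∈ gd.b.D₀ e) ∧
  (∀ g : G, ∀ x : Ob, x ∈ a.D₀ g ↔
      (gd.ι x ∈ gd.b.D₀ (𝒢.r g) ∧
        ∃ x' : Ob, gd.ι x' ∈ gd.b.D₀ (𝒢.d g) ∧ gd.b.act₀ g (gd.ι x') = gd.ι x)) ∧
  (∀ g : G, ∀ x ∈ a.D₀ (𝒢.inv g), gd.ι (a.act₀ g x) = gd.b.act₀ g (gd.ι x)) ∧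
  -- (ii) each φ_e is a faithful semifunctor with φ_e(I^e) ⊴ J^e
  (∀ e ∈ 𝒢.units,
    (∀ (y x : Ob) (f f' : C.Hom y x), f ∈ a.I e y x → f' ∈ a.I e y x →
        gd.φ e (f + f') = gd.φ e f + gd.φ e f') ∧
    (∀ (y x : Ob) (c : R) (f : C.Hom y x), f ∈ a.I e y x →
        gd.φ e (c • f) = c • gd.φ e f) ∧
    (∀ (z y x : Ob) (f : C.Hom z y) (f' : C.Hom y x), f ∈ a.I e z y → f' ∈ a.I e y x →
        gd.φ e (C.comp f f') = D.comp (gd.φ e f) (gd.φ e f')) ∧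
    (∀ (y x : Ob) (f f' : C.Hom y x), f ∈ a.I e y x → f' ∈ a.I e y x →
        gd.φ e f = gd.φ e f' → f = f') ∧
    (∀ (y x : Ob) (f : C.Hom y x), f ∈ a.I e y x →
        gd.φ e f ∈ gd.b.I e (gd.ι y) (gd.ι x))) ∧
  (∀ e ∈ 𝒢.units, ∀ (w z x' : Ob') (u : D.Hom w z) (k : D.Hom z x'),
      u ∈ gd.b.I e w z → ImageMem C D gd.ι (a.I e) (gd.φ e) k →
      ImageMem C D gd.ι (a.I e) (gd.φ e) (D.comp u k)) ∧
  (∀ e ∈ 𝒢.units, ∀ (z x' w : Ob') (k : D.Hom z x') (u : D.Hom x' w),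
      ImageMem C D gd.ι (a.I e) (gd.φ e) k → u ∈ gd.b.I e x' w →
      ImageMem C D gd.ι (a.I e) (gd.φ e) (D.comp k u)) ∧
  -- (iii) φ_{r g}(_yI^g_x) = φ_{r g}(_yI^{r g}_x) ∩ β^g(φ_{d g}(_{g⁻¹y}I^{d g}_{g⁻¹x}))
  (∀ g : G, ∀ y ∈ a.D₀ g, ∀ x ∈ a.D₀ g, ∀ k : D.Hom (gd.ι y) (gd.ι x),
      (∃ f ∈ a.I g y x, gd.φ (𝒢.r g) f = k) ↔
        ((∃ f ∈ a.I (𝒢.r g) y x, gd.φ (𝒢.r g) f = k) ∧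
          ∃ f' : C.Hom (a.act₀ (𝒢.inv g) y) (a.act₀ (𝒢.inv g) x),
            f' ∈ a.I (𝒢.d g) (a.act₀ (𝒢.inv g) y) (a.act₀ (𝒢.inv g) x) ∧
            HEq (gd.b.act g (gd.φ (𝒢.d g) f')) k)) ∧
  -- (iv) β^g ∘ φ_{d g} = φ_{r g} ∘ α^g on I^{g⁻¹}
  (∀ (g : G) (y x : Ob) (f : C.Hom y x), f ∈ a.I (𝒢.inv g) y x →
      HEq (gd.b.act g (gd.φ (𝒢.d g) f)) (gd.φ (𝒢.r g) (a.act g f))) ∧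
  -- (v) _yJ^g_x = Σ_{r h = r g} β^h(φ_{d h}(_{h⁻¹y}I^{d h}_{h⁻¹x}))
  (∀ (g : G) (y x : Ob'), gd.b.I g y x = Submodule.span R
      {m : D.Hom y x | ∃ h : G, 𝒢.r h = 𝒢.r g ∧
        ∃ (y' x' : Ob) (f : C.Hom y' x'), f ∈ a.I (𝒢.d h) y' x' ∧
          gd.ι y' = gd.b.act₀ (𝒢.inv h) y ∧ gd.ι x' = gd.b.act₀ (𝒢.inv h) x ∧
          HEq (gd.b.act h (gd.φ (𝒢.d h) f)) m})

/-- The ring homomorphism `ψ_e : a(C) → a(D)` induced componentwise by a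
semifunctor `φ_e`. -/
def aPhiRing {C : RSemicat.{u, v, w} R Ob} {D : RSemicat.{u, v', w'} R Ob'}
    (ι : Ob → Ob') (φ : ∀ (e : G) {y x : Ob}, C.Hom y x → D.Hom (ι y) (ι x))
    (e : G) (F : aHom C) : aHom D :=
  DFinsupp.sum F fun p v => DFinsupp.single (⟨ι p.1, ι p.2⟩ : Ob' × Ob') (φ e v)

/-- A global action `(DN, actN)` of `𝒢` on the ring `(N, mulN)` is a
globalization of the partial ring action `(DM, actM)` of `𝒢` on `(M, mulM)`
via the ring monomorphisms `ψ_e` (Definition 3.1 of the paper). -/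
def IsRingGlobalization {M N : Type*} [AddCommGroup M] [AddCommGroup N]
    (𝒢 : AlgGroupoid G)
    (mulM : M → M → M) (DM : G → Set M) (actM : G → M → M)
    (mulN : N → N → N) (DN : G → Set N) (actN : G → N → N)
    (ψ : G → M → N) : Prop :=
  IsRingPartialAction 𝒢 mulN DN actN ∧
  RingActionIsGlobal 𝒢 DN actN ∧
  (∀ e ∈ 𝒢.units,
    (∀ x ∈ DM e, ψ e x ∈ DN e) ∧
    (∀ x ∈ DM e, ∀ y ∈ DM e, ψ e (x + y) = ψ e x + ψ e y) ∧
    (∀ x ∈ DM e, ∀ y ∈ DM e, ψ e (mulM x y) = mulN (ψ e x) (ψ e y)) ∧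
    (∀ x ∈ DM e, ∀ y ∈ DM e, ψ e x = ψ e y → x = y) ∧
    -- (i) ψ_e(A_e) is an ideal of B_e
    IsRingIdealPair mulN (ψ e '' DM e) (DN e)) ∧
  -- (ii)
  (∀ g : G, ψ (𝒢.r g) '' DM g =
      (ψ (𝒢.r g) '' DM (𝒢.r g)) ∩ (actN g '' (ψ (𝒢.d g) '' DM (𝒢.d g)))) ∧
  -- (iii)
  (∀ g : G, ∀ x ∈ DM (𝒢.inv g), actN g (ψ (𝒢.d g) x) = ψ (𝒢.r g) (actM g x)) ∧
  -- (iv)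
  (∀ g : G, ∀ k : N, k ∈ DN g ↔ k ∈ AddSubgroup.closure
      {m : N | ∃ h : G, 𝒢.r h = 𝒢.r g ∧ ∃ F ∈ DM (𝒢.d h), m = actN h (ψ (𝒢.d h) F)})

end Globalization

section Orbits

/-- The orbit relation induced by a partial action of a groupoid: `e ∼ f`
iff `f = g e` for some morphism `g` with `e` in the domain of `α_g`. -/
def orbRel {Y : Type*} (𝒢 : AlgGroupoid G) (D : G → Set Y) (act : G → Y → Y)
    (e f : Y) : Prop :=
  ∃ g : G, e ∈ D (𝒢.inv g) ∧ act g e = f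

/-- `C(ρ,τ)_g = ⊕_{x ∈ ρ, y ∈ τ} _yI^g_x`, realized inside `a(C)`. -/
def CSet (C : RSemicat.{u, v, w} R Ob) (a : SemicatActionData R G C)
    (ρ τ : Set Ob) (g : G) : Set (aHom C) :=
  {F | ∀ p : Ob × Ob, F p ∈ a.I g p.1 p.2 ∧ (F p ≠ 0 → p.1 ∈ τ ∧ p.2 ∈ ρ)}

end Orbits
section SkewCatAlgebra

/-- The morphism module `_y(C∗_α𝒢)_x = ⊕_{g} _yI^g_{gx}` of the partial skew
groupoid semicategory (realized as a direct sum over all of `G`; the genuine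
morphisms are those supported on `𝒢^x` with components in `I^g`). -/
abbrev SkewHomT (C : RSemicat.{u, v, w} R Ob) (a : SemicatActionData R G C)
    (y x : Ob) : Type (max u₂ w) :=
  Π₀ g : G, C.Hom y (a.act₀ g x)

/-- Composition in the partial skew groupoid semicategory `C∗_α𝒢`. -/
def skewHomMul (𝒢 : AlgGroupoid G) (C : RSemicat.{u, v, w} R Ob)
    (a : SemicatActionData R G C) {z y x : Ob}
    (F : SkewHomT C a z y) (K : SkewHomT C a y x) : SkewHomT C a z x :=
  DFinsupp.sum F fun t f => DFinsupp.sum K fun g l =>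
    DFinsupp.single (𝒢.mul t g) (skewMul 𝒢 C a t g f l)

/-- The underlying module of the algebra `a(C∗_α𝒢)`. -/
abbrev aSkewT (C : RSemicat.{u, v, w} R Ob) (a : SemicatActionData R G C) :
    Type (max v u₂ w) :=
  Π₀ p : Ob × Ob, SkewHomT C a p.1 p.2

/-- The multiplication of the algebra `a(C∗_α𝒢)`. -/
def aSkewMul (𝒢 : AlgGroupoid G) (C : RSemicat.{u, v, w} R Ob)
    (a : SemicatActionData R G C) (F K : aSkewT C a) : aSkewT C a :=
  DFinsupp.sum F fun p u => DFinsupp.sum K fun q v =>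
    if h : p.2 = q.1 then
      DFinsupp.single (⟨p.1, q.2⟩ : Ob × Ob)
        (skewHomMul 𝒢 C a u (cast (by rw [h]) v : SkewHomT C a p.2 q.2))
    else 0

/-- The set of genuine elements of `a(C∗_α𝒢)` inside `aSkewT`. -/
def aSkewSet (𝒢 : AlgGroupoid G) (C : RSemicat.{u, v, w} R Ob)
    (a : SemicatActionData R G C) : Set (aSkewT C a) :=
  {F | ∀ (p : Ob × Ob) (g : G), F p g ∈ a.I g p.1 (a.act₀ g p.2) ∧
    (p.2 ∉ a.D₀ (𝒢.inv g) → F p g = 0)}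

/-- The underlying module of the partial skew groupoid ring
`a(C)∗_α𝒢 = ⊕_g a(C)_g δ_g`. -/
abbrev sRingT (G : Type u₂) (C : RSemicat.{u, v, w} R Ob) : Type (max v u₂ w) :=
  Π₀ _g : G, aHom C

/-- The multiplication of the partial skew groupoid ring `a(C)∗_α𝒢`:
`(a_g δ_g)(b_h δ_h) = α_g(α_{g⁻¹}(a_g) b_h) δ_{gh}` when `(g,h)` is
composable, and `0` otherwise. -/
def sRingMul (𝒢 : AlgGroupoid G) (C : RSemicat.{u, v, w} R Ob)
    (a : SemicatActionData R G C) (F K : sRingT G C) : sRingT G C :=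
  DFinsupp.sum F fun g ag => DFinsupp.sum K fun h bh =>
    if 𝒢.comp g h then
      DFinsupp.single (𝒢.mul g h) (aAct a g (aMul C (aAct a (𝒢.inv g) ag) bh))
    else 0

/-- The set of genuine elements of `a(C)∗_α𝒢` inside `sRingT`. -/
def sRingSet (C : RSemicat.{u, v, w} R Ob) (a : SemicatActionData R G C) :
    Set (sRingT G C) :=
  {K | ∀ (g : G) (p : Ob × Ob), K g p ∈ a.I g p.1 p.2}

/-- The isomorphism `a(C∗_α𝒢) → a(C)∗_α𝒢`, `f_g ↦ f_g δ_g`. -/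
def aPhi (C : RSemicat.{u, v, w} R Ob) (a : SemicatActionData R G C)
    (F : aSkewT C a) : sRingT G C :=
  DFinsupp.sum F fun p u => DFinsupp.sum u fun g f =>
    DFinsupp.single g (DFinsupp.single (⟨p.1, a.act₀ g p.2⟩ : Ob × Ob) f)

end SkewCatAlgebra

section Graded

/-- A `𝒢`-grading of an `R`-semicategory `B`: decompositions
`_yB_x = ⊕_{g} _yB_x^g` such that `_zB_y^t ⬝ _yB_x^s ⊆ _zB_x^{ts}` when
`d t = r s` and `_zB_y^t ⬝ _yB_x^s = 0` otherwise. -/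
def IsGrading (𝒢 : AlgGroupoid G) (B : RSemicat.{u, v, w} R Ob)
    (deco : ∀ y x : Ob, G → Submodule R (B.Hom y x)) : Prop :=
  (∀ y x : Ob, DirectSum.IsInternal fun g : G => deco y x g) ∧
  (∀ (z y x : Ob) (t s : G), 𝒢.comp t s → ∀ u ∈ deco z y t, ∀ v ∈ deco y x s,
      B.comp u v ∈ deco z x (𝒢.mul t s)) ∧
  (∀ (z y x : Ob) (t s : G), ¬ 𝒢.comp t s → ∀ u ∈ deco z y t, ∀ v ∈ deco y x s,
      B.comp u v = 0)

/-- The morphism submodule `_{(y,t)}(B#𝒢)_{(x,s)}` of the smash product: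
`_yB_x^{t⁻¹ s}` when `r t = r s`, and `0` otherwise. -/
def smashMod (𝒢 : AlgGroupoid G) (B : RSemicat.{u, v, w} R Ob)
    (deco : ∀ y x : Ob, G → Submodule R (B.Hom y x))
    (yt xs : Ob × G) : Submodule R (B.Hom yt.1 xs.1) :=
  if 𝒢.r yt.2 = 𝒢.r xs.2 then deco yt.1 xs.1 (𝒢.mul (𝒢.inv yt.2) xs.2) else ⊥

/-- The smash product `R`-semicategory `B#𝒢`. -/
def Smash (𝒢 : AlgGroupoid G) (B : RSemicat.{u, v, w} R Ob)
    (deco : ∀ y x : Ob, G → Submodule R (B.Hom y x))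
    (hgr : IsGrading 𝒢 B deco) :
    RSemicat.{u, max v u₂, w} R (Ob × G) where
  Hom yt xs := ↥(smashMod 𝒢 B deco yt xs)
  comp {z y x} f g := ⟨B.comp f.1 g.1, by
    obtain ⟨fv, hf⟩ := f
    obtain ⟨gv, hg⟩ := g
    show B.comp fv gv ∈ smashMod 𝒢 B deco z x
    unfold smashMod at hf hg ⊢
    by_cases h1 : 𝒢.r z.2 = 𝒢.r y.2
    · by_cases h2 : 𝒢.r y.2 = 𝒢.r x.2
      · rw [if_pos h1] at hf
        rw [if_pos h2] at hg
        rw [if_pos (h1.trans h2)]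
        have c1 : 𝒢.comp (𝒢.inv z.2) y.2 :=
          (𝒢.comp_iff _ _).2 (by rw [𝒢.inv_inv']; exact h1)
        have c2 : 𝒢.comp (𝒢.inv y.2) x.2 :=
          (𝒢.comp_iff _ _).2 (by rw [𝒢.inv_inv']; exact h2)
        have ccy : 𝒢.comp y.2 (𝒢.inv y.2) := 𝒢.comp_inv_right y.2
        have ccyc : 𝒢.comp y.2 (𝒢.mul (𝒢.inv y.2) x.2) :=
          𝒢.comp_mul_right y.2 (𝒢.inv y.2) x.2 ccy c2
        have hcomp : 𝒢.comp (𝒢.mul (𝒢.inv z.2) y.2) (𝒢.mul (𝒢.inv y.2) x.2) :=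
          𝒢.comp_mul_left (𝒢.inv z.2) y.2 (𝒢.mul (𝒢.inv y.2) x.2) c1 ccyc
        have hmem := hgr.2.1 z.1 y.1 x.1 (𝒢.mul (𝒢.inv z.2) y.2)
          (𝒢.mul (𝒢.inv y.2) x.2) hcomp fv hf gv hg
        have h2' : 𝒢.mul y.2 (𝒢.inv y.2) = 𝒢.mul x.2 (𝒢.inv x.2) := h2
        have s5 : 𝒢.mul x.2 (𝒢.mul (𝒢.inv x.2) x.2) = x.2 := by
          have h5 := 𝒢.inv_mul_cancel' (𝒢.inv x.2) x.2 (𝒢.comp_inv_left x.2)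
          rwa [𝒢.inv_inv'] at h5
        have hidx : 𝒢.mul (𝒢.mul (𝒢.inv z.2) y.2) (𝒢.mul (𝒢.inv y.2) x.2) =
            𝒢.mul (𝒢.inv z.2) x.2 := by
          rw [𝒢.mul_assoc' (𝒢.inv z.2) y.2 (𝒢.mul (𝒢.inv y.2) x.2) c1 ccyc,
            ← 𝒢.mul_assoc' y.2 (𝒢.inv y.2) x.2 ccy c2, h2',
            𝒢.mul_assoc' x.2 (𝒢.inv x.2) x.2 (𝒢.comp_inv_right x.2) (𝒢.comp_inv_left x.2),
            s5]
        rw [hidx] at hmem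
        exact hmem
      · rw [if_neg h2] at hg
        have hg0 : gv = 0 := by simpa using hg
        rw [hg0, B.comp_zero_right]
        exact Submodule.zero_mem _
    · rw [if_neg h1] at hf
      have hf0 : fv = 0 := by simpa using hf
      rw [hf0, B.comp_zero_left]
      exact Submodule.zero_mem _⟩
  comp_assoc f g h := Subtype.ext (B.comp_assoc f.1 g.1 h.1)
  comp_add_left f f' g := Subtype.ext (B.comp_add_left f.1 f'.1 g.1)
  comp_add_right f g g' := Subtype.ext (B.comp_add_right f.1 g.1 g'.1)
  comp_smul_left c f g := Subtype.ext (B.comp_smul_left c f.1 g.1)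
  comp_smul_right c f g := Subtype.ext (B.comp_smul_right c f.1 g.1)

/-- The object part of the global action of `𝒢` on `B#𝒢`:
`α₀^g (x, s) = (x, g s)`. -/
def smashAct₀ (𝒢 : AlgGroupoid G) (g : G) (p : Ob × G) : Ob × G :=
  (p.1, 𝒢.mul g p.2)

/-- The global action of `𝒢` on the smash product `B#𝒢` (domains
`B₀ × 𝒢(-, r g)`, `α₀^g(x,s) = (x, gs)`, ideals `_{(y,t)}I^g_{(x,s)}`
given by `_yB_x^{t⁻¹s}` when `r t = r s = r g` and `0` otherwise, and `α^g`
given by the identity on the underlying morphisms of `B`). -/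
def smashActionData (𝒢 : AlgGroupoid G) (B : RSemicat.{u, v, w} R Ob)
    (deco : ∀ y x : Ob, G → Submodule R (B.Hom y x))
    (hgr : IsGrading 𝒢 B deco) :
    SemicatActionData R G (Smash 𝒢 B deco hgr) where
  D₀ g := {p : Ob × G | 𝒢.r p.2 = 𝒢.r g}
  act₀ := smashAct₀ 𝒢
  I g yt xs := if 𝒢.r yt.2 = 𝒢.r g ∧ 𝒢.r xs.2 = 𝒢.r g then ⊤ else ⊥
  act g {yt xs} f :=
    if h : (f.1 : B.Hom yt.1 xs.1) ∈
        smashMod 𝒢 B deco (smashAct₀ 𝒢 g yt) (smashAct₀ 𝒢 g xs) then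
      ⟨f.1, h⟩
    else 0

end Graded


/-!
Everything is checked entry by entry. `a(C)` and `a(T)` are matrix algebras whose entry at
`(y, x)` lies in `_yC_x`, resp. `_yT_x`, and the induced maps `α_g`, `β_g`, `ψ_e` move the
entry at `(y, x)` to `(g y, g x)`, resp. `(ι y, ι x)`, applying `α^g`, `β^g`, `φ_e` to it.
Writing an element as a finite sum of matrix units, the ring axioms for `β_{a(T)}` become the
semicategory axioms of `β`, and conditions (i), (iii), (iv) for `ψ` become the corresponding
conditions for `φ`; entries never collide because `α₀^g`, `β₀^g` are injective on their domains
and `ι` is injective.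

The one condition that needs an argument beyond this is (ii). If `ψ_{r g}(F₀) = β_g(ψ_{d g}(F₁))`
with `F₀ ∈ a(C)_{r g}` and `F₁ ∈ a(C)_{d g}`, every nonzero entry of `F₀` sits at objects of the
form `β₀^g(ι x')` with `x' ∈ C₀^{d g}`, hence at objects of `C₀^g`, because `β₀` globalizes
`α₀`. There the globalization condition on morphisms applies, and faithfulness of `φ_{r g}` puts
the entry into `I^g`, so `F₀ ∈ a(C)_g`.
-/

universe v'' w''

namespace AlgGroupoid

variable (𝒢 : AlgGroupoid G)

lemma d_inv (g : G) : 𝒢.d (𝒢.inv g) = 𝒢.r g := by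
  unfold d r; rw [𝒢.inv_inv']

lemma r_inv (g : G) : 𝒢.r (𝒢.inv g) = 𝒢.d g := by
  unfold d r; rw [𝒢.inv_inv']

lemma d_mem_units (g : G) : 𝒢.d g ∈ 𝒢.units := ⟨g, rfl⟩

lemma r_mem_units (g : G) : 𝒢.r g ∈ 𝒢.units := ⟨𝒢.inv g, (𝒢.d_inv g).symm⟩

lemma inv_eq_self_of_mem_units {e : G} (he : e ∈ 𝒢.units) : 𝒢.inv e = e := by
  obtain ⟨g, rfl⟩ := he
  unfold d
  rw [𝒢.inv_mul' _ _ (𝒢.comp_inv_left g), 𝒢.inv_inv']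

end AlgGroupoid

lemma eq_zero_of_map_add_self {M N : Type*} [AddCommGroup M] [AddCommGroup N] {f : M → N}
    (h : f (0 + 0) = f 0 + f 0) : f 0 = 0 := by
  rw [add_zero] at h
  exact left_eq_add.mp h

lemma Finset.sum_mem_image_of_map_add {M N ι : Type*} [AddCommMonoid M] [AddCommMonoid N]
    {S : AddSubmonoid M} {f : M → N} (hf0 : f 0 = 0)
    (hf : ∀ x ∈ S, ∀ y ∈ S, f (x + y) = f x + f y) (s : Finset ι) {n : ι → N}
    (hn : ∀ i ∈ s, n i ∈ f '' S) : ∑ i ∈ s, n i ∈ f '' S := by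
  refine Finset.sum_induction _ (· ∈ f '' S) ?_ ⟨0, S.zero_mem, hf0⟩ hn
  rintro _ _ ⟨x, hx, rfl⟩ ⟨y, hy, rfl⟩
  exact ⟨x + y, S.add_mem hx hy, hf x hx y hy⟩

lemma heq_smul {K M : Type*} {X : M → Type*} [∀ m, SMul K (X m)] {m m' : M} (hm : m = m')
    (c : K) {v : X m} {w : X m'} (h : HEq v w) : HEq (c • v) (c • w) := by
  subst hm; rw [eq_of_heq h]

section MatrixAlgebra

variable {Ob' : Type v'} {C : RSemicat.{u, v, w} R Ob} {D : RSemicat.{u, v', w'} R Ob'}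

def aSubmodule (S : ∀ y x : Ob, Submodule R (C.Hom y x)) : Submodule R (aHom C) where
  carrier := {F | ∀ p : Ob × Ob, F p ∈ S p.1 p.2}
  add_mem' hF hK p := add_mem (hF p) (hK p)
  zero_mem' _ := zero_mem _
  smul_mem' c _ hF p := Submodule.smul_mem _ c (hF p)

lemma single_mem_aSubmodule {S : ∀ y x : Ob, Submodule R (C.Hom y x)} {p : Ob × Ob}
    {v : C.Hom p.1 p.2} (hv : v ∈ S p.1 p.2) : DFinsupp.single p v ∈ aSubmodule S := by
  intro q
  by_cases h : p = q
  · subst h; rwa [DFinsupp.single_eq_same]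
  · rw [DFinsupp.single_eq_of_ne (Ne.symm h)]; exact zero_mem _

lemma single_eq_of_heq {p q : Ob × Ob} (hpq : p = q) {v : C.Hom p.1 p.2} {w : C.Hom q.1 q.2}
    (hvw : HEq v w) : (DFinsupp.single p v : aHom C) = DFinsupp.single q w := by
  subst hpq; rw [eq_of_heq hvw]

lemma heq_apply (F : aHom C) {p q : Ob × Ob} (h : p = q) : HEq (F p) (F q) := by
  subst h; rfl

section aMap

variable (τ : Ob × Ob → Ob' × Ob')
  (Φ : ∀ p : Ob × Ob, C.Hom p.1 p.2 → D.Hom (τ p).1 (τ p).2)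

def aMap (F : aHom C) : aHom D :=
  F.sum fun p v => DFinsupp.single (τ p) (Φ p v)

variable {τ Φ}

lemma aMap_eq_sum (hΦ0 : ∀ p, Φ p 0 = 0) {F : aHom C} {s : Finset (Ob × Ob)}
    (hs : F.support ⊆ s) : aMap τ Φ F = ∑ p ∈ s, DFinsupp.single (τ p) (Φ p (F p)) :=
  Finset.sum_subset hs fun p _ hp => by
    show (DFinsupp.single (τ p) (Φ p (F p)) : aHom D) = 0
    rw [DFinsupp.notMem_support_iff.mp hp, hΦ0, DFinsupp.single_zero]

lemma aMap_zero : aMap τ Φ (0 : aHom C) = 0 := DFinsupp.sum_zero_index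

lemma aMap_single (hΦ0 : ∀ p, Φ p 0 = 0) (p : Ob × Ob) (v : C.Hom p.1 p.2) :
    aMap τ Φ (DFinsupp.single p v) = DFinsupp.single (τ p) (Φ p v) :=
  DFinsupp.sum_single_index (by rw [hΦ0, DFinsupp.single_zero])

lemma aMap_mem_aSubmodule {J : ∀ y x : Ob', Submodule R (D.Hom y x)} {F : aHom C}
    (h : ∀ p ∈ F.support, Φ p (F p) ∈ J (τ p).1 (τ p).2) : aMap τ Φ F ∈ aSubmodule J :=
  Submodule.sum_mem _ fun p hp => single_mem_aSubmodule (h p hp)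

variable {S : ∀ y x : Ob, Submodule R (C.Hom y x)}
  (hΦ : ∀ p : Ob × Ob, ∀ v ∈ S p.1 p.2, ∀ w ∈ S p.1 p.2, Φ p (v + w) = Φ p v + Φ p w)
include hΦ

lemma aMap_add {F K : aHom C} (hF : F ∈ aSubmodule S) (hK : K ∈ aSubmodule S) :
    aMap τ Φ (F + K) = aMap τ Φ F + aMap τ Φ K := by
  have hΦ0 p : Φ p 0 = 0 := eq_zero_of_map_add_self (hΦ p 0 (zero_mem _) 0 (zero_mem _))
  rw [aMap_eq_sum hΦ0 DFinsupp.support_add,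
    aMap_eq_sum hΦ0 (Finset.subset_union_left (s₂ := K.support)),
    aMap_eq_sum hΦ0 (Finset.subset_union_right (s₁ := F.support)), ← Finset.sum_add_distrib]
  refine Finset.sum_congr rfl fun p _ => ?_
  rw [DFinsupp.add_apply, hΦ p _ (hF p) _ (hK p), DFinsupp.single_add]

lemma aMap_sum {ι : Type*} (s : Finset ι) {F : ι → aHom C}
    (hF : ∀ i ∈ s, F i ∈ aSubmodule S) :
    aMap τ Φ (∑ i ∈ s, F i) = ∑ i ∈ s, aMap τ Φ (F i) := by
  classical
  induction s using Finset.cons_induction with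
  | empty => exact aMap_zero
  | cons i s hi ih =>
    have hs : ∀ j ∈ s, F j ∈ aSubmodule S := fun j hj => hF j (Finset.mem_cons_of_mem hj)
    rw [Finset.sum_cons, Finset.sum_cons, aMap_add hΦ (hF i (Finset.mem_cons_self i s))
      (Submodule.sum_mem _ hs), ih hs]

lemma aMap_neg {F : aHom C} (hF : F ∈ aSubmodule S) : aMap τ Φ (-F) = -aMap τ Φ F := by
  have h := aMap_add hΦ ((aSubmodule S).neg_mem hF) hF
  rw [neg_add_cancel, aMap_zero] at h
  exact eq_neg_of_add_eq_zero_left h.symm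

omit hΦ

lemma aMap_apply (hΦ0 : ∀ p, Φ p 0 = 0) {F : aHom C} (p : Ob × Ob)
    (hinj : ∀ q ∈ F.support, τ q = τ p → q = p) : aMap τ Φ F (τ p) = Φ p (F p) := by
  rw [aMap, DFinsupp.sum, DFinsupp.finsetSum_apply]
  by_cases hp : p ∈ F.support
  · exact (Finset.sum_eq_single p
      (fun q hq hqp => DFinsupp.single_eq_of_ne fun h => hqp (hinj q hq h.symm))
      (fun h => absurd hp h)).trans DFinsupp.single_eq_same
  · rw [DFinsupp.notMem_support_iff.mp hp, hΦ0]
    exact Finset.sum_eq_zero fun q hq =>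
      DFinsupp.single_eq_of_ne fun h => hp (by rwa [hinj q hq h.symm] at hq)

lemma exists_mem_support_of_aMap_apply_ne_zero {F : aHom C} {q : Ob' × Ob'}
    (hq : aMap τ Φ F q ≠ 0) : ∃ p ∈ F.support, τ p = q := by
  by_contra! h
  apply hq
  rw [aMap, DFinsupp.sum, DFinsupp.finsetSum_apply]
  exact Finset.sum_eq_zero fun p hp => DFinsupp.single_eq_of_ne (h p hp).symm

lemma aMap_aMap {Ob'' : Type v''} {E : RSemicat.{u, v'', w''} R Ob''}
    {τ' : Ob' × Ob' → Ob'' × Ob''}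
    {Φ' : ∀ p : Ob' × Ob', D.Hom p.1 p.2 → E.Hom (τ' p).1 (τ' p).2}
    {S' : ∀ y x : Ob', Submodule R (D.Hom y x)} (hΦ0 : ∀ p, Φ p 0 = 0)
    (hΦ' : ∀ p : Ob' × Ob', ∀ v ∈ S' p.1 p.2, ∀ w ∈ S' p.1 p.2,
      Φ' p (v + w) = Φ' p v + Φ' p w)
    {F : aHom C} (hF : ∀ p, Φ p (F p) ∈ S' (τ p).1 (τ p).2) :
    aMap τ' Φ' (aMap τ Φ F) =
      ∑ p ∈ F.support, DFinsupp.single (τ' (τ p)) (Φ' (τ p) (Φ p (F p))) := by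
  have hΦ'0 p : Φ' p 0 = 0 := eq_zero_of_map_add_self (hΦ' p 0 (zero_mem _) 0 (zero_mem _))
  rw [aMap_eq_sum hΦ0 subset_rfl,
    aMap_sum hΦ' _ fun p _ => single_mem_aSubmodule (hF p)]
  exact Finset.sum_congr rfl fun p _ => aMap_single hΦ'0 _ _

end aMap

variable (C) in
def elemMul (p q : Ob × Ob) (v : C.Hom p.1 p.2) (w : C.Hom q.1 q.2) : aHom C :=
  if h : p.2 = q.1 then
    DFinsupp.single (⟨p.1, q.2⟩ : Ob × Ob) (C.comp v (cast (by rw [h]) w))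
  else 0

lemma aMul_eq_sum_elemMul (F K : aHom C) :
    aMul C F K = F.sum fun p v => K.sum fun q w => elemMul C p q v w := rfl

lemma elemMul_eq (y x u : Ob) (v : C.Hom y x) (w : C.Hom x u) :
    elemMul C (y, x) (x, u) v w = DFinsupp.single (⟨y, u⟩ : Ob × Ob) (C.comp v w) :=
  dif_pos rfl

lemma elemMul_of_ne {p q : Ob × Ob} (h : p.2 ≠ q.1) (v : C.Hom p.1 p.2) (w : C.Hom q.1 q.2) :
    elemMul C p q v w = 0 := dif_neg h

lemma elemMul_zero_left (p q : Ob × Ob) (w : C.Hom q.1 q.2) :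
    elemMul C p q (0 : C.Hom p.1 p.2) w = 0 := by
  obtain ⟨y, x⟩ := p; obtain ⟨x', u⟩ := q
  by_cases h : x = x'
  · subst h; rw [elemMul_eq, C.comp_zero_left, DFinsupp.single_zero]
  · exact elemMul_of_ne h _ _

lemma elemMul_zero_right (p q : Ob × Ob) (v : C.Hom p.1 p.2) :
    elemMul C p q v (0 : C.Hom q.1 q.2) = 0 := by
  obtain ⟨y, x⟩ := p; obtain ⟨x', u⟩ := q
  by_cases h : x = x'
  · subst h; rw [elemMul_eq, C.comp_zero_right, DFinsupp.single_zero]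
  · exact elemMul_of_ne h _ _

lemma elemMul_add_left (p q : Ob × Ob) (v v' : C.Hom p.1 p.2) (w : C.Hom q.1 q.2) :
    elemMul C p q (v + v') w = elemMul C p q v w + elemMul C p q v' w := by
  obtain ⟨y, x⟩ := p; obtain ⟨x', u⟩ := q
  by_cases h : x = x'
  · subst h; rw [elemMul_eq, elemMul_eq, elemMul_eq, C.comp_add_left, DFinsupp.single_add]
  · rw [elemMul_of_ne h, elemMul_of_ne h, elemMul_of_ne h, add_zero]

lemma elemMul_add_right (p q : Ob × Ob) (v : C.Hom p.1 p.2) (w w' : C.Hom q.1 q.2) :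
    elemMul C p q v (w + w') = elemMul C p q v w + elemMul C p q v w' := by
  obtain ⟨y, x⟩ := p; obtain ⟨x', u⟩ := q
  by_cases h : x = x'
  · subst h; rw [elemMul_eq, elemMul_eq, elemMul_eq, C.comp_add_right, DFinsupp.single_add]
  · rw [elemMul_of_ne h, elemMul_of_ne h, elemMul_of_ne h, add_zero]

section Products

variable {S S' S'' : ∀ y x : Ob, Submodule R (C.Hom y x)}
  (hS : ∀ (z y x : Ob) (u : C.Hom z y) (f : C.Hom y x), u ∈ S z y → f ∈ S' y x →
    C.comp u f ∈ S'' z x)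
include hS

lemma elemMul_mem_aSubmodule {p q : Ob × Ob} {v : C.Hom p.1 p.2} {w : C.Hom q.1 q.2}
    (hv : v ∈ S p.1 p.2) (hw : w ∈ S' q.1 q.2) : elemMul C p q v w ∈ aSubmodule S'' := by
  obtain ⟨y, x⟩ := p; obtain ⟨x', u⟩ := q
  by_cases h : x = x'
  · subst h
    rw [elemMul_eq]
    exact single_mem_aSubmodule (hS y x u v w hv hw)
  · rw [elemMul_of_ne h]
    exact zero_mem _

lemma aMul_mem_aSubmodule {F K : aHom C} (hF : F ∈ aSubmodule S) (hK : K ∈ aSubmodule S') :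
    aMul C F K ∈ aSubmodule S'' :=
  Submodule.sum_mem _ fun p _ => Submodule.sum_mem _ fun q _ =>
    elemMul_mem_aSubmodule hS (hF p) (hK q)

end Products

lemma aMul_add_left (F F' K : aHom C) : aMul C (F + F') K = aMul C F K + aMul C F' K :=
  DFinsupp.sum_add_index
    (fun p => DFinsupp.sum_eq_zero fun q => elemMul_zero_left p q (K q))
    (fun p v v' => by
      simp only [DFinsupp.sum]
      rw [← Finset.sum_add_distrib]
      exact Finset.sum_congr rfl fun q _ => elemMul_add_left p q v v' (K q))

lemma aMul_add_right (F K K' : aHom C) : aMul C F (K + K') = aMul C F K + aMul C F K' := by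
  rw [aMul_eq_sum_elemMul, aMul_eq_sum_elemMul, aMul_eq_sum_elemMul, ← DFinsupp.sum_add]
  refine Finset.sum_congr rfl fun p _ => ?_
  exact DFinsupp.sum_add_index (fun q => elemMul_zero_right p q (F p))
    (fun q w w' => elemMul_add_right p q (F p) w w')

lemma aMul_single_single (p q : Ob × Ob) (v : C.Hom p.1 p.2) (w : C.Hom q.1 q.2) :
    aMul C (DFinsupp.single p v) (DFinsupp.single q w) = elemMul C p q v w := by
  rw [aMul_eq_sum_elemMul, DFinsupp.sum_single_index
    (DFinsupp.sum_eq_zero fun q' => elemMul_zero_left p q' _)]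
  exact DFinsupp.sum_single_index (elemMul_zero_right p q v)

lemma aMul_sum_left {ι : Type*} (s : Finset ι) (F : ι → aHom C) (K : aHom C) :
    aMul C (∑ i ∈ s, F i) K = ∑ i ∈ s, aMul C (F i) K :=
  map_sum (AddMonoidHom.mk' (fun F => aMul C F K) fun F F' => aMul_add_left F F' K) F s

lemma aMul_sum_right {ι : Type*} (s : Finset ι) (F : aHom C) (K : ι → aHom C) :
    aMul C F (∑ i ∈ s, K i) = ∑ i ∈ s, aMul C F (K i) :=
  map_sum (AddMonoidHom.mk' (aMul C F) (aMul_add_right F)) K s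

lemma aMap_aMul (t : Ob → Ob') (Φ : ∀ y x : Ob, C.Hom y x → D.Hom (t y) (t x))
    {S : ∀ y x : Ob, Submodule R (C.Hom y x)} {Dom : Set Ob}
    (hΦ : ∀ (p : Ob × Ob), ∀ v ∈ S p.1 p.2, ∀ w ∈ S p.1 p.2,
      Φ p.1 p.2 (v + w) = Φ p.1 p.2 v + Φ p.1 p.2 w)
    (hS : ∀ (z y x : Ob) (u : C.Hom z y) (f : C.Hom y x), u ∈ S z y → f ∈ S y x →
      C.comp u f ∈ S z x)
    (hΦcomp : ∀ (z y x : Ob) (u : C.Hom z y) (f : C.Hom y x), u ∈ S z y → f ∈ S y x →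
      Φ z x (C.comp u f) = D.comp (Φ z y u) (Φ y x f))
    (ht : Set.InjOn t Dom) {F K : aHom C} (hF : F ∈ aSubmodule S) (hK : K ∈ aSubmodule S)
    (hFD : ∀ p : Ob × Ob, F p ≠ 0 → p.1 ∈ Dom ∧ p.2 ∈ Dom)
    (hKD : ∀ p : Ob × Ob, K p ≠ 0 → p.1 ∈ Dom ∧ p.2 ∈ Dom) :
    aMap (fun p => (t p.1, t p.2)) (fun p v => Φ p.1 p.2 v) (aMul C F K) =
      aMul D (aMap (fun p => (t p.1, t p.2)) (fun p v => Φ p.1 p.2 v) F)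
        (aMap (fun p => (t p.1, t p.2)) (fun p v => Φ p.1 p.2 v) K) := by
  have hΦ0 (p : Ob × Ob) : Φ p.1 p.2 0 = 0 :=
    eq_zero_of_map_add_self (hΦ p 0 (zero_mem _) 0 (zero_mem _))
  have hrow : ∀ p ∈ F.support, (K.sum fun q w => elemMul C p q (F p) w) ∈ aSubmodule S :=
    fun p _ => Submodule.sum_mem _ fun q _ => elemMul_mem_aSubmodule hS (hF p) (hK q)
  rw [aMul_eq_sum_elemMul, DFinsupp.sum, aMap_sum hΦ _ hrow, aMap_eq_sum hΦ0 subset_rfl,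
    aMap_eq_sum hΦ0 subset_rfl, aMul_sum_left]
  refine Finset.sum_congr rfl fun p hp => ?_
  rw [DFinsupp.sum, aMap_sum hΦ _ fun q _ => elemMul_mem_aSubmodule hS (hF p) (hK q),
    aMul_sum_right]
  refine Finset.sum_congr rfl fun q hq => ?_
  rw [aMul_single_single]
  obtain ⟨hp1, hp2⟩ := hFD p (DFinsupp.mem_support_iff.mp hp)
  obtain ⟨hq1, hq2⟩ := hKD q (DFinsupp.mem_support_iff.mp hq)
  obtain ⟨y, x⟩ := p
  obtain ⟨x', u⟩ := q
  by_cases h : x = x'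
  · subst h
    rw [elemMul_eq, aMap_single hΦ0, elemMul_eq, hΦcomp y x u _ _ (hF (y, x)) (hK (x, u))]
  · rw [elemMul_of_ne h, aMap_zero, elemMul_of_ne fun he => h (ht hp2 hq1 he)]

end MatrixAlgebra

namespace IsSemicatPartialAction

variable {𝒢 : AlgGroupoid G} {C : RSemicat.{u, v, w} R Ob} {a : SemicatActionData R G C}
  (hpa : IsSemicatPartialAction 𝒢 C a)
include hpa

lemma D₀_subset_D₀_r (g : G) : a.D₀ g ⊆ a.D₀ (𝒢.r g) := hpa.1.2.1 g

lemma act₀_of_mem_units {e : G} (he : e ∈ 𝒢.units) {x : Ob} (hx : x ∈ a.D₀ e) :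
    a.act₀ e x = x := hpa.1.2.2.2.1 e he x hx

lemma act₀_mem {g : G} {x : Ob} (hx : x ∈ a.D₀ (𝒢.inv g)) : a.act₀ g x ∈ a.D₀ g :=
  hpa.1.2.2.2.2.1 g x hx

lemma act₀_inv_act₀ {g : G} {x : Ob} (hx : x ∈ a.D₀ (𝒢.inv g)) :
    a.act₀ (𝒢.inv g) (a.act₀ g x) = x := hpa.1.2.2.2.2.2.1 g x hx

lemma act₀_act₀ {g h : G} (hgh : 𝒢.comp g h) {x : Ob} (hx : x ∈ a.D₀ (𝒢.inv h))
    (hx' : a.act₀ h x ∈ a.D₀ (𝒢.inv g)) :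
    a.act₀ g (a.act₀ h x) = a.act₀ (𝒢.mul g h) x :=
  hpa.1.2.2.2.2.2.2.2 g h hgh x hx ⟨hx', hpa.act₀_mem hx⟩

lemma I_eq_bot {g : G} {y x : Ob} (h : ¬(y ∈ a.D₀ g ∧ x ∈ a.D₀ g)) : a.I g y x = ⊥ :=
  hpa.2.1 g y x h

lemma isIdealIn (g : G) : C.IsIdealIn (a.I g) (a.I (𝒢.r g)) := hpa.2.2.1 g

lemma isIdeal (g : G) : C.IsIdeal (a.I (𝒢.r g)) := hpa.2.2.2.1 g

lemma act_mem {g : G} {y x : Ob} {f : C.Hom y x} (hf : f ∈ a.I (𝒢.inv g) y x) :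
    a.act g f ∈ a.I g (a.act₀ g y) (a.act₀ g x) := hpa.2.2.2.2.1 g y x f hf

lemma act_add {g : G} {y x : Ob} {f f' : C.Hom y x} (hf : f ∈ a.I (𝒢.inv g) y x)
    (hf' : f' ∈ a.I (𝒢.inv g) y x) : a.act g (f + f') = a.act g f + a.act g f' :=
  hpa.2.2.2.2.2.1 g y x f f' hf hf'

lemma act_smul {g : G} {y x : Ob} (c : R) {f : C.Hom y x} (hf : f ∈ a.I (𝒢.inv g) y x) :
    a.act g (c • f) = c • a.act g f := hpa.2.2.2.2.2.2.1 g y x c f hf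

lemma act_injOn {g : G} {y x : Ob} {f f' : C.Hom y x} (hf : f ∈ a.I (𝒢.inv g) y x)
    (hf' : f' ∈ a.I (𝒢.inv g) y x) (h : a.act g f = a.act g f') : f = f' :=
  hpa.2.2.2.2.2.2.2.1 g y x f f' hf hf' h

lemma act_comp {g : G} {z y x : Ob} {f : C.Hom z y} {f' : C.Hom y x}
    (hf : f ∈ a.I (𝒢.inv g) z y) (hf' : f' ∈ a.I (𝒢.inv g) y x) :
    a.act g (C.comp f f') = C.comp (a.act g f) (a.act g f') :=
  hpa.2.2.2.2.2.2.2.2.2.1 g z y x f f' hf hf'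

lemma act_of_mem_units {e : G} (he : e ∈ 𝒢.units) {y x : Ob} {f : C.Hom y x}
    (hf : f ∈ a.I e y x) : HEq (a.act e f) f := hpa.2.2.2.2.2.2.2.2.2.2.1 e he y x f hf

lemma act_inv_mem {g h : G} (hgh : 𝒢.comp g h) {y x : Ob} {f : C.Hom y x}
    (hfh : f ∈ a.I h y x) (hfg : f ∈ a.I (𝒢.inv g) y x) :
    a.act (𝒢.inv h) f ∈
      a.I (𝒢.inv (𝒢.mul g h)) (a.act₀ (𝒢.inv h) y) (a.act₀ (𝒢.inv h) x) :=
  hpa.2.2.2.2.2.2.2.2.2.2.2.1 g h hgh y x f hfh hfg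

lemma act_act {g h : G} (hgh : 𝒢.comp g h) {y x : Ob} {f : C.Hom y x}
    (hf : f ∈ a.I (𝒢.inv h) y x)
    (hf' : a.act h f ∈ a.I (𝒢.inv g) (a.act₀ h y) (a.act₀ h x)) :
    HEq (a.act g (a.act h f)) (a.act (𝒢.mul g h) f) :=
  hpa.2.2.2.2.2.2.2.2.2.2.2.2 g h hgh y x f hf hf'

lemma act_zero (g : G) (y x : Ob) : a.act g (0 : C.Hom y x) = 0 :=
  eq_zero_of_map_add_self (hpa.act_add (zero_mem _) (zero_mem _))

lemma act_ne_zero {g : G} {y x : Ob} {f : C.Hom y x} (hf : f ∈ a.I (𝒢.inv g) y x)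
    (h0 : f ≠ 0) : a.act g f ≠ 0 := fun h =>
  h0 (hpa.act_injOn hf (zero_mem _) (h.trans (hpa.act_zero g y x).symm))

lemma mem_D₀_of_mem_I {g : G} {y x : Ob} {f : C.Hom y x} (hf : f ∈ a.I g y x)
    (h0 : f ≠ 0) : y ∈ a.D₀ g ∧ x ∈ a.D₀ g := by
  by_contra h
  rw [hpa.I_eq_bot h, Submodule.mem_bot] at hf
  exact h0 hf

lemma I_le_I_r {g : G} {y x : Ob} {f : C.Hom y x} (hf : f ∈ a.I g y x) :
    f ∈ a.I (𝒢.r g) y x := (hpa.isIdealIn g).1 y x hf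

lemma I_inv_le_I_d {g : G} {y x : Ob} {f : C.Hom y x} (hf : f ∈ a.I (𝒢.inv g) y x) :
    f ∈ a.I (𝒢.d g) y x := by
  simpa only [𝒢.r_inv] using hpa.I_le_I_r hf

lemma act₀_act₀_inv {g : G} {x : Ob} (hx : x ∈ a.D₀ g) :
    a.act₀ g (a.act₀ (𝒢.inv g) x) = x := by
  have h := hpa.act₀_inv_act₀ (g := 𝒢.inv g) (by rwa [𝒢.inv_inv'])
  rwa [𝒢.inv_inv'] at h

lemma act₀_inv_mem {g : G} {x : Ob} (hx : x ∈ a.D₀ g) :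
    a.act₀ (𝒢.inv g) x ∈ a.D₀ (𝒢.inv g) :=
  hpa.act₀_mem (by rwa [𝒢.inv_inv'])

lemma act₀_injOn (g : G) : Set.InjOn (a.act₀ g) (a.D₀ (𝒢.inv g)) := fun x hx y hy h => by
  rw [← hpa.act₀_inv_act₀ hx, ← hpa.act₀_inv_act₀ hy, h]

lemma act_inv_act {g : G} {y x : Ob} {f : C.Hom y x} (hf : f ∈ a.I (𝒢.inv g) y x) :
    HEq (a.act (𝒢.inv g) (a.act g f)) f := by
  have hf' : a.act g f ∈ a.I (𝒢.inv (𝒢.inv g)) (a.act₀ g y) (a.act₀ g x) := by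
    rw [𝒢.inv_inv']; exact hpa.act_mem hf
  exact (hpa.act_act (𝒢.comp_inv_left g) hf hf').trans
    (hpa.act_of_mem_units (𝒢.d_mem_units g) (hpa.I_inv_le_I_d hf))

end IsSemicatPartialAction

section InducedRingAction

variable {𝒢 : AlgGroupoid G} {C : RSemicat.{u, v, w} R Ob}

lemma isRingIdealPair_aSubmodule_univ {I : ∀ y x : Ob, Submodule R (C.Hom y x)}
    (hI : C.IsIdeal I) : IsRingIdealPair (aMul C) (aSubmodule I) Set.univ := by
  have htop : ∀ F : aHom C, F ∈ aSubmodule fun y x => (⊤ : Submodule R (C.Hom y x)) :=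
    fun F p => Submodule.mem_top
  refine ⟨Set.subset_univ _, zero_mem _, fun _ hF _ hK => add_mem hF hK,
    fun _ hF => neg_mem hF, fun F _ K hK => ⟨?_, ?_⟩⟩
  · exact aMul_mem_aSubmodule (fun z y x u f _ hf => hI.1 z y x u f hf) (htop F) hK
  · exact aMul_mem_aSubmodule (fun z y x f u hf _ => hI.2 z y x f u hf) hK (htop F)

lemma isRingIdealPair_aSubmodule {J I : ∀ y x : Ob, Submodule R (C.Hom y x)}
    (hJI : C.IsIdealIn J I) : IsRingIdealPair (aMul C) (aSubmodule J) (aSubmodule I) :=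
  ⟨fun _ hF p => hJI.1 p.1 p.2 (hF p), zero_mem _, fun _ hF _ hK => add_mem hF hK,
    fun _ hF => neg_mem hF, fun _ hF _ hK =>
      ⟨aMul_mem_aSubmodule hJI.2.1 hF hK, aMul_mem_aSubmodule hJI.2.2 hK hF⟩⟩

lemma aAct_eq_aMap (a : SemicatActionData R G C) (g : G) :
    aAct a g = aMap (fun p => (a.act₀ g p.1, a.act₀ g p.2)) (fun _ v => a.act g v) := rfl

namespace IsSemicatPartialAction

variable {a : SemicatActionData R G C} (hpa : IsSemicatPartialAction 𝒢 C a)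
include hpa

lemma aAct_mem {g : G} {F : aHom C} (hF : F ∈ aIdealSet C a (𝒢.inv g)) :
    aAct a g F ∈ aIdealSet C a g :=
  aMap_mem_aSubmodule fun p _ => hpa.act_mem (hF p)

lemma aAct_add {g : G} {F K : aHom C} (hF : F ∈ aIdealSet C a (𝒢.inv g))
    (hK : K ∈ aIdealSet C a (𝒢.inv g)) : aAct a g (F + K) = aAct a g F + aAct a g K :=
  aMap_add (fun _ _ hv _ hw => hpa.act_add hv hw) hF hK

lemma aAct_single (g : G) (p : Ob × Ob) (v : C.Hom p.1 p.2) :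
    aAct a g (DFinsupp.single p v) = DFinsupp.single (a.act₀ g p.1, a.act₀ g p.2) (a.act g v) :=
  aMap_single (fun q => hpa.act_zero g q.1 q.2) p v

lemma aAct_apply {g : G} {F : aHom C} (hF : F ∈ aIdealSet C a (𝒢.inv g)) {y x : Ob}
    (hy : y ∈ a.D₀ (𝒢.inv g)) (hx : x ∈ a.D₀ (𝒢.inv g)) :
    aAct a g F (a.act₀ g y, a.act₀ g x) = a.act g (F (y, x)) := by
  refine aMap_apply (fun q => hpa.act_zero g q.1 q.2) (y, x) fun q hq hqp => ?_
  obtain ⟨hq1, hq2⟩ := hpa.mem_D₀_of_mem_I (hF q) (DFinsupp.mem_support_iff.mp hq)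
  obtain ⟨e1, e2⟩ := Prod.mk.inj hqp
  exact Prod.ext (hpa.act₀_injOn g hq1 hy e1) (hpa.act₀_injOn g hq2 hx e2)

lemma aAct_inv_aAct {g : G} {F : aHom C} (hF : F ∈ aIdealSet C a (𝒢.inv g)) :
    aAct a (𝒢.inv g) (aAct a g F) = F := by
  have hadd : ∀ p : Ob × Ob, ∀ v ∈ a.I g p.1 p.2, ∀ w ∈ a.I g p.1 p.2,
      a.act (𝒢.inv g) (v + w) = a.act (𝒢.inv g) v + a.act (𝒢.inv g) w := fun p v hv w hw =>
    hpa.act_add (g := 𝒢.inv g) (by rwa [𝒢.inv_inv']) (by rwa [𝒢.inv_inv'])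
  rw [aAct_eq_aMap, aAct_eq_aMap,
    aMap_aMap (fun p => hpa.act_zero g p.1 p.2) hadd fun p => hpa.act_mem (hF p)]
  refine (Finset.sum_congr rfl fun p hp => ?_).trans (DFinsupp.sum_single (f := F))
  obtain ⟨hp1, hp2⟩ := hpa.mem_D₀_of_mem_I (hF p) (DFinsupp.mem_support_iff.mp hp)
  exact single_eq_of_heq (Prod.ext (hpa.act₀_inv_act₀ hp1) (hpa.act₀_inv_act₀ hp2))
    (hpa.act_inv_act (hF p))

lemma exists_aAct_eq {g : G} {K : aHom C} (hK : K ∈ aIdealSet C a g) :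
    ∃ F ∈ aIdealSet C a (𝒢.inv g), aAct a g F = K := by
  have hK' : K ∈ aIdealSet C a (𝒢.inv (𝒢.inv g)) := by rwa [𝒢.inv_inv']
  refine ⟨aAct a (𝒢.inv g) K, hpa.aAct_mem hK', ?_⟩
  simpa only [𝒢.inv_inv'] using hpa.aAct_inv_aAct hK'

lemma aAct_aMul {g : G} {F K : aHom C} (hF : F ∈ aIdealSet C a (𝒢.inv g))
    (hK : K ∈ aIdealSet C a (𝒢.inv g)) :
    aAct a g (aMul C F K) = aMul C (aAct a g F) (aAct a g K) :=
  aMap_aMul (a.act₀ g) (fun _ _ v => a.act g v) (fun _ _ hv _ hw => hpa.act_add hv hw)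
    (fun z y x u f hu hf => (hpa.isIdealIn _).2.1 z y x u f (hpa.I_le_I_r hu) hf)
    (fun _ _ _ _ _ hu hf => hpa.act_comp hu hf) (hpa.act₀_injOn g) hF hK
    (fun p => hpa.mem_D₀_of_mem_I (hF p)) (fun p => hpa.mem_D₀_of_mem_I (hK p))

lemma aAct_of_mem_units {e : G} (he : e ∈ 𝒢.units) {F : aHom C}
    (hF : F ∈ aIdealSet C a e) : aAct a e F = F := by
  rw [aAct_eq_aMap, aMap_eq_sum (fun p => hpa.act_zero e p.1 p.2) subset_rfl]
  refine (Finset.sum_congr rfl fun p hp => ?_).trans (DFinsupp.sum_single (f := F))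
  obtain ⟨hp1, hp2⟩ := hpa.mem_D₀_of_mem_I (hF p) (DFinsupp.mem_support_iff.mp hp)
  exact single_eq_of_heq
    (Prod.ext (hpa.act₀_of_mem_units he hp1) (hpa.act₀_of_mem_units he hp2))
    (hpa.act_of_mem_units he (hF p))

lemma aAct_inv_mem {g h : G} (hgh : 𝒢.comp g h) {F : aHom C}
    (hFg : F ∈ aIdealSet C a (𝒢.inv g)) (hFh : F ∈ aIdealSet C a h) :
    aAct a (𝒢.inv h) F ∈ aIdealSet C a (𝒢.inv (𝒢.mul g h)) :=
  aMap_mem_aSubmodule fun p _ => hpa.act_inv_mem hgh (hFh p) (hFg p)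

lemma act_mem_of_aAct_mem {g h : G} {F : aHom C} (hF : F ∈ aIdealSet C a (𝒢.inv h))
    (hF' : aAct a h F ∈ aIdealSet C a (𝒢.inv g)) (p : Ob × Ob) :
    a.act h (F p) ∈ a.I (𝒢.inv g) (a.act₀ h p.1) (a.act₀ h p.2) := by
  by_cases h0 : F p = 0
  · rw [h0, hpa.act_zero]; exact zero_mem _
  obtain ⟨hp1, hp2⟩ := hpa.mem_D₀_of_mem_I (hF p) h0
  rw [← hpa.aAct_apply hF hp1 hp2]
  exact hF' (a.act₀ h p.1, a.act₀ h p.2)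

/-- A nonzero entry of `aAct a h F` lying in `I^{g⁻¹}` sits at objects of `C₀^{g⁻¹}` (as `α^h`
is injective), so the object actions compose there as well. -/
lemma aAct_aAct {g h : G} (hgh : 𝒢.comp g h) {F : aHom C} (hF : F ∈ aIdealSet C a (𝒢.inv h))
    (hF' : aAct a h F ∈ aIdealSet C a (𝒢.inv g)) :
    aAct a g (aAct a h F) = aAct a (𝒢.mul g h) F := by
  have hmem := hpa.act_mem_of_aAct_mem hF hF'
  rw [aAct_eq_aMap, aAct_eq_aMap,
    aMap_aMap (fun p => hpa.act_zero h p.1 p.2) (fun _ _ hv _ hw => hpa.act_add hv hw) hmem,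
    aAct_eq_aMap, aMap_eq_sum (fun p => hpa.act_zero _ p.1 p.2) subset_rfl]
  refine Finset.sum_congr rfl fun p hp => ?_
  have h0 := DFinsupp.mem_support_iff.mp hp
  obtain ⟨hp1, hp2⟩ := hpa.mem_D₀_of_mem_I (hF p) h0
  obtain ⟨hq1, hq2⟩ := hpa.mem_D₀_of_mem_I (hmem p) (hpa.act_ne_zero (hF p) h0)
  exact single_eq_of_heq
    (Prod.ext (hpa.act₀_act₀ hgh hp1 hq1) (hpa.act₀_act₀ hgh hp2 hq2))
    (hpa.act_act hgh (hF p) (hmem p))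

theorem isRingPartialAction :
    IsRingPartialAction 𝒢 (aMul C) (aIdealSet C a) (aAct a) :=
  ⟨fun g => isRingIdealPair_aSubmodule_univ (hpa.isIdeal g),
    fun g => isRingIdealPair_aSubmodule (hpa.isIdealIn g),
    fun _ _ hF => hpa.aAct_mem hF, fun _ _ hF => hpa.aAct_inv_aAct hF,
    fun _ _ hK => hpa.exists_aAct_eq hK, fun _ _ hF _ hK => hpa.aAct_add hF hK,
    fun _ _ hF _ hK => hpa.aAct_aMul hF hK, fun _ he _ hF => hpa.aAct_of_mem_units he hF,
    fun _ _ hgh _ hFg hFh => hpa.aAct_inv_mem hgh hFg hFh,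
    fun _ _ hgh _ hF hF' => hpa.aAct_aAct hgh hF hF'⟩

end IsSemicatPartialAction

end InducedRingAction

namespace SemicatActionIsGlobal

variable {𝒢 : AlgGroupoid G} {C : RSemicat.{u, v, w} R Ob} {a : SemicatActionData R G C}
  (hgl : SemicatActionIsGlobal 𝒢 C a)
include hgl

lemma mem_I_inv_mul_iff {g h : G} (hgh : 𝒢.comp g h) {y x : Ob} (f : C.Hom y x) :
    f ∈ a.I (𝒢.inv (𝒢.mul g h)) y x ↔
      f ∈ a.I (𝒢.inv h) y x ∧ a.act h f ∈ a.I (𝒢.inv g) (a.act₀ h y) (a.act₀ h x) :=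
  (hgl.2 g h hgh y x f).1

lemma I_d_le_I_inv {g : G} {y x : Ob} {f : C.Hom y x} (hf : f ∈ a.I (𝒢.d g) y x) :
    f ∈ a.I (𝒢.inv g) y x := by
  have hd : 𝒢.inv (𝒢.mul (𝒢.inv g) g) = 𝒢.d g :=
    𝒢.inv_eq_self_of_mem_units (𝒢.d_mem_units g)
  exact ((hgl.mem_I_inv_mul_iff (𝒢.comp_inv_left g) f).mp (hd ▸ hf)).1

lemma I_r_le_I {g : G} {y x : Ob} {f : C.Hom y x} (hf : f ∈ a.I (𝒢.r g) y x) :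
    f ∈ a.I g y x := by
  simpa only [𝒢.inv_inv'] using hgl.I_d_le_I_inv (g := 𝒢.inv g) (by rwa [𝒢.d_inv])

lemma D₀_d_subset_D₀_inv (g : G) : a.D₀ (𝒢.d g) ⊆ a.D₀ (𝒢.inv g) := by
  have hd : 𝒢.inv (𝒢.mul (𝒢.inv g) g) = 𝒢.d g :=
    𝒢.inv_eq_self_of_mem_units (𝒢.d_mem_units g)
  have h := (hgl.1 (𝒢.inv g) g (𝒢.comp_inv_left g)).1
  rw [hd] at h
  exact fun x hx => (h ▸ hx : x ∈ {x ∈ a.D₀ (𝒢.inv g) | _}).1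

lemma D₀_r_subset_D₀ (g : G) : a.D₀ (𝒢.r g) ⊆ a.D₀ g := by
  simpa only [𝒢.d_inv, 𝒢.inv_inv'] using hgl.D₀_d_subset_D₀_inv (𝒢.inv g)

variable (hpa : IsSemicatPartialAction 𝒢 C a)
include hpa

lemma I_congr {g h : G} (hr : 𝒢.r h = 𝒢.r g) {y x : Ob} {f : C.Hom y x}
    (hf : f ∈ a.I h y x) : f ∈ a.I g y x :=
  hgl.I_r_le_I (hr ▸ hpa.I_le_I_r hf)

lemma D₀_congr {g h : G} (hr : 𝒢.r h = 𝒢.r g) {x : Ob} (hx : x ∈ a.D₀ h) :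
    x ∈ a.D₀ g :=
  hgl.D₀_r_subset_D₀ g (hr ▸ hpa.D₀_subset_D₀_r h hx)

theorem ringActionIsGlobal : RingActionIsGlobal 𝒢 (aIdealSet C a) (aAct a) := by
  have hiff : ∀ g h, 𝒢.comp g h → ∀ F, F ∈ aIdealSet C a (𝒢.inv (𝒢.mul g h)) ↔
      F ∈ aIdealSet C a (𝒢.inv h) ∧ aAct a h F ∈ aIdealSet C a (𝒢.inv g) := by
    refine fun g h hgh F => ⟨fun hF => ⟨fun p => ((hgl.mem_I_inv_mul_iff hgh _).mp (hF p)).1,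
      aMap_mem_aSubmodule fun p _ => ((hgl.mem_I_inv_mul_iff hgh _).mp (hF p)).2⟩, ?_⟩
    rintro ⟨hF, hF'⟩ p
    exact (hgl.mem_I_inv_mul_iff hgh _).mpr ⟨hF p, hpa.act_mem_of_aAct_mem hF hF' p⟩
  refine fun g h hgh => ⟨hiff g h hgh, fun F hF => ?_⟩
  obtain ⟨hF, hF'⟩ := (hiff g h hgh F).mp hF
  exact hpa.aAct_aAct hgh hF hF'

end SemicatActionIsGlobal

lemma aPhiRing_eq_aMap {Ob' : Type v'} {C : RSemicat.{u, v, w} R Ob}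
    {D : RSemicat.{u, v', w'} R Ob'} (ι : Ob → Ob')
    (φ : ∀ (_ : G) {y x : Ob}, C.Hom y x → D.Hom (ι y) (ι x)) (e : G) :
    aPhiRing ι φ e = aMap (fun p => (ι p.1, ι p.2)) (fun _ v => φ e v) := rfl

namespace IsGlobalization

variable {Ob' : Type v'} {𝒢 : AlgGroupoid G} {C : RSemicat.{u, v, w} R Ob}
  {T : RSemicat.{u, v', w'} R Ob'} {a : SemicatActionData R G C} {gd : GlobalizationData R G C T}
  (hg : IsGlobalization 𝒢 C a T gd)
include hg

lemma injective : Function.Injective gd.ι := hg.1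

lemma partialAction : IsSemicatPartialAction 𝒢 T gd.b := hg.2.1

lemma global : SemicatActionIsGlobal 𝒢 T gd.b := hg.2.2.1

lemma mem_D₀_iff_of_mem_units {e : G} (he : e ∈ 𝒢.units) (x : Ob) :
    x ∈ a.D₀ e ↔ gd.ι x ∈ gd.b.D₀ e := hg.2.2.2.1 e he x

lemma mem_D₀_of_act₀ {g : G} {x x' : Ob} (hx : gd.ι x ∈ gd.b.D₀ (𝒢.r g))
    (hx' : gd.ι x' ∈ gd.b.D₀ (𝒢.d g)) (h : gd.b.act₀ g (gd.ι x') = gd.ι x) :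
    x ∈ a.D₀ g :=
  (hg.2.2.2.2.1 g x).mpr ⟨hx, x', hx', h⟩

lemma ι_act₀ {g : G} {x : Ob} (hx : x ∈ a.D₀ (𝒢.inv g)) :
    gd.ι (a.act₀ g x) = gd.b.act₀ g (gd.ι x) := hg.2.2.2.2.2.1 g x hx

lemma φ_mem_iff {g : G} {y x : Ob} (hy : y ∈ a.D₀ g) (hx : x ∈ a.D₀ g)
    (k : T.Hom (gd.ι y) (gd.ι x)) :
    (∃ f ∈ a.I g y x, gd.φ (𝒢.r g) f = k) ↔
      ((∃ f ∈ a.I (𝒢.r g) y x, gd.φ (𝒢.r g) f = k) ∧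
        ∃ f' : C.Hom (a.act₀ (𝒢.inv g) y) (a.act₀ (𝒢.inv g) x),
          f' ∈ a.I (𝒢.d g) (a.act₀ (𝒢.inv g) y) (a.act₀ (𝒢.inv g) x) ∧
          HEq (gd.b.act g (gd.φ (𝒢.d g) f')) k) :=
  hg.2.2.2.2.2.2.2.2.2.1 g y hy x hx k

lemma act_φ {g : G} {y x : Ob} {f : C.Hom y x} (hf : f ∈ a.I (𝒢.inv g) y x) :
    HEq (gd.b.act g (gd.φ (𝒢.d g) f)) (gd.φ (𝒢.r g) (a.act g f)) :=
  hg.2.2.2.2.2.2.2.2.2.2.1 g y x f hf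

lemma I_eq_span (g : G) (y x : Ob') : gd.b.I g y x = Submodule.span R
    {m : T.Hom y x | ∃ h : G, 𝒢.r h = 𝒢.r g ∧
      ∃ (y' x' : Ob) (f : C.Hom y' x'), f ∈ a.I (𝒢.d h) y' x' ∧
        gd.ι y' = gd.b.act₀ (𝒢.inv h) y ∧ gd.ι x' = gd.b.act₀ (𝒢.inv h) x ∧
        HEq (gd.b.act h (gd.φ (𝒢.d h) f)) m} :=
  hg.2.2.2.2.2.2.2.2.2.2.2 g y x

section Unit

variable {e : G} (he : e ∈ 𝒢.units)
include he

lemma φ_add {y x : Ob} {f f' : C.Hom y x} (hf : f ∈ a.I e y x) (hf' : f' ∈ a.I e y x) :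
    gd.φ e (f + f') = gd.φ e f + gd.φ e f' := (hg.2.2.2.2.2.2.1 e he).1 y x f f' hf hf'

lemma φ_smul (c : R) {y x : Ob} {f : C.Hom y x} (hf : f ∈ a.I e y x) :
    gd.φ e (c • f) = c • gd.φ e f := (hg.2.2.2.2.2.2.1 e he).2.1 y x c f hf

lemma φ_comp {z y x : Ob} {f : C.Hom z y} {f' : C.Hom y x} (hf : f ∈ a.I e z y)
    (hf' : f' ∈ a.I e y x) : gd.φ e (C.comp f f') = T.comp (gd.φ e f) (gd.φ e f') :=
  (hg.2.2.2.2.2.2.1 e he).2.2.1 z y x f f' hf hf'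

lemma φ_injOn {y x : Ob} {f f' : C.Hom y x} (hf : f ∈ a.I e y x) (hf' : f' ∈ a.I e y x)
    (h : gd.φ e f = gd.φ e f') : f = f' := (hg.2.2.2.2.2.2.1 e he).2.2.2.1 y x f f' hf hf' h

lemma φ_mem {y x : Ob} {f : C.Hom y x} (hf : f ∈ a.I e y x) :
    gd.φ e f ∈ gd.b.I e (gd.ι y) (gd.ι x) := (hg.2.2.2.2.2.2.1 e he).2.2.2.2 y x f hf

lemma imageMem_comp_left {w z x' : Ob'} {u : T.Hom w z} {k : T.Hom z x'}
    (hu : u ∈ gd.b.I e w z) (hk : ImageMem C T gd.ι (a.I e) (gd.φ e) k) :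
    ImageMem C T gd.ι (a.I e) (gd.φ e) (T.comp u k) := hg.2.2.2.2.2.2.2.1 e he w z x' u k hu hk

lemma imageMem_comp_right {z x' w : Ob'} {k : T.Hom z x'} {u : T.Hom x' w}
    (hk : ImageMem C T gd.ι (a.I e) (gd.φ e) k) (hu : u ∈ gd.b.I e x' w) :
    ImageMem C T gd.ι (a.I e) (gd.φ e) (T.comp k u) :=
  hg.2.2.2.2.2.2.2.2.1 e he z x' w k u hk hu

lemma φ_zero (y x : Ob) : gd.φ e (0 : C.Hom y x) = 0 :=
  eq_zero_of_map_add_self (hg.φ_add he (zero_mem _) (zero_mem _))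


lemma aPhiRing_mem {F : aHom C} (hF : F ∈ aIdealSet C a e) :
    aPhiRing gd.ι gd.φ e F ∈ aIdealSet T gd.b e :=
  aMap_mem_aSubmodule fun p _ => hg.φ_mem he (hF p)

lemma aPhiRing_add {F K : aHom C} (hF : F ∈ aIdealSet C a e) (hK : K ∈ aIdealSet C a e) :
    aPhiRing gd.ι gd.φ e (F + K) = aPhiRing gd.ι gd.φ e F + aPhiRing gd.ι gd.φ e K :=
  aMap_add (fun _ _ hv _ hw => hg.φ_add he hv hw) hF hK

lemma aPhiRing_neg {F : aHom C} (hF : F ∈ aIdealSet C a e) :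
    aPhiRing gd.ι gd.φ e (-F) = -aPhiRing gd.ι gd.φ e F :=
  aMap_neg (fun _ _ hv _ hw => hg.φ_add he hv hw) hF

lemma aPhiRing_sum {ι : Type*} (s : Finset ι) {F : ι → aHom C}
    (hF : ∀ i ∈ s, F i ∈ aIdealSet C a e) :
    aPhiRing gd.ι gd.φ e (∑ i ∈ s, F i) = ∑ i ∈ s, aPhiRing gd.ι gd.φ e (F i) :=
  aMap_sum (fun _ _ hv _ hw => hg.φ_add he hv hw) s hF

lemma aPhiRing_single (p : Ob × Ob) (v : C.Hom p.1 p.2) :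
    aPhiRing gd.ι gd.φ e (DFinsupp.single p v) =
      DFinsupp.single (gd.ι p.1, gd.ι p.2) (gd.φ e v) :=
  aMap_single (fun q => hg.φ_zero he q.1 q.2) p v

lemma aPhiRing_apply (F : aHom C) (y x : Ob) :
    aPhiRing gd.ι gd.φ e F (gd.ι y, gd.ι x) = gd.φ e (F (y, x)) :=
  aMap_apply (fun q => hg.φ_zero he q.1 q.2) (y, x) fun _ _ hqp => by
    obtain ⟨e1, e2⟩ := Prod.mk.inj hqp
    exact Prod.ext (hg.injective e1) (hg.injective e2)

lemma aPhiRing_aMul (hpa : IsSemicatPartialAction 𝒢 C a) {F K : aHom C}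
    (hF : F ∈ aIdealSet C a e) (hK : K ∈ aIdealSet C a e) :
    aPhiRing gd.ι gd.φ e (aMul C F K) =
      aMul T (aPhiRing gd.ι gd.φ e F) (aPhiRing gd.ι gd.φ e K) :=
  aMap_aMul gd.ι (fun _ _ v => gd.φ e v) (fun _ _ hv _ hw => hg.φ_add he hv hw)
    (fun z y x u f hu hf => (hpa.isIdealIn e).2.1 z y x u f (hpa.I_le_I_r hu) hf)
    (fun _ _ _ _ _ hu hf => hg.φ_comp he hu hf) (hg.injective.injOn (s := Set.univ))
    hF hK (fun _ _ => ⟨trivial, trivial⟩) (fun _ _ => ⟨trivial, trivial⟩)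

lemma aPhiRing_injOn {F K : aHom C} (hF : F ∈ aIdealSet C a e) (hK : K ∈ aIdealSet C a e)
    (h : aPhiRing gd.ι gd.φ e F = aPhiRing gd.ι gd.φ e K) : F = K := by
  ext ⟨y, x⟩
  refine hg.φ_injOn he (hF (y, x)) (hK (y, x)) ?_
  rw [← hg.aPhiRing_apply he, ← hg.aPhiRing_apply he, h]

lemma sum_mem_image_aPhiRing {ι : Type*} (s : Finset ι) {n : ι → aHom T}
    (hn : ∀ i ∈ s, n i ∈ aPhiRing gd.ι gd.φ e '' aIdealSet C a e) :
    ∑ i ∈ s, n i ∈ aPhiRing gd.ι gd.φ e '' aIdealSet C a e :=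
  Finset.sum_mem_image_of_map_add (S := (aSubmodule (a.I e)).toAddSubmonoid) aMap_zero
    (fun _ hF _ hK => hg.aPhiRing_add he hF hK) s hn

lemma single_mem_image_aPhiRing {z x' : Ob'} {k : T.Hom z x'}
    (hk : ImageMem C T gd.ι (a.I e) (gd.φ e) k) :
    DFinsupp.single (z, x') k ∈ aPhiRing gd.ι gd.φ e '' aIdealSet C a e := by
  rcases hk with rfl | ⟨y, x, f, hf, rfl, rfl, hfk⟩
  · exact ⟨0, zero_mem (aSubmodule (a.I e)), by rw [DFinsupp.single_zero]; exact aMap_zero⟩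
  · exact ⟨DFinsupp.single (y, x) f, single_mem_aSubmodule hf,
      (hg.aPhiRing_single he (y, x) f).trans (single_eq_of_heq rfl hfk)⟩

lemma aMul_aPhiRing_mem_image {U : aHom T} (hU : U ∈ aIdealSet T gd.b e) {F : aHom C}
    (hF : F ∈ aIdealSet C a e) :
    aMul T U (aPhiRing gd.ι gd.φ e F) ∈ aPhiRing gd.ι gd.φ e '' aIdealSet C a e := by
  rw [aMul_eq_sum_elemMul]
  refine hg.sum_mem_image_aPhiRing he _ fun q _ => hg.sum_mem_image_aPhiRing he _ fun r hr => ?_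
  obtain ⟨p, -, rfl⟩ :=
    exists_mem_support_of_aMap_apply_ne_zero (DFinsupp.mem_support_iff.mp hr)
  obtain ⟨z, z'⟩ := q
  beta_reduce
  by_cases hz : z' = gd.ι p.1
  · subst hz
    rw [elemMul_eq, hg.aPhiRing_apply he]
    exact hg.single_mem_image_aPhiRing he (hg.imageMem_comp_left he (hU (z, gd.ι p.1))
      (Or.inr ⟨p.1, p.2, F p, hF p, rfl, rfl, HEq.rfl⟩))
  · rw [elemMul_of_ne hz]
    exact ⟨0, zero_mem (aSubmodule (a.I e)), aMap_zero⟩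

lemma aPhiRing_aMul_mem_image {U : aHom T} (hU : U ∈ aIdealSet T gd.b e) {F : aHom C}
    (hF : F ∈ aIdealSet C a e) :
    aMul T (aPhiRing gd.ι gd.φ e F) U ∈ aPhiRing gd.ι gd.φ e '' aIdealSet C a e := by
  rw [aMul_eq_sum_elemMul]
  refine hg.sum_mem_image_aPhiRing he _ fun r hr => hg.sum_mem_image_aPhiRing he _ fun q _ => ?_
  obtain ⟨p, -, rfl⟩ :=
    exists_mem_support_of_aMap_apply_ne_zero (DFinsupp.mem_support_iff.mp hr)
  obtain ⟨z, z'⟩ := q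
  beta_reduce
  by_cases hz : gd.ι p.2 = z
  · subst hz
    rw [elemMul_eq, hg.aPhiRing_apply he]
    exact hg.single_mem_image_aPhiRing he (hg.imageMem_comp_right he
      (Or.inr ⟨p.1, p.2, F p, hF p, rfl, rfl, HEq.rfl⟩) (hU (gd.ι p.2, z')))
  · rw [elemMul_of_ne hz]
    exact ⟨0, zero_mem (aSubmodule (a.I e)), aMap_zero⟩

lemma isRingIdealPair_image_aPhiRing :
    IsRingIdealPair (aMul T) (aPhiRing gd.ι gd.φ e '' aIdealSet C a e) (aIdealSet T gd.b e) := by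
  refine ⟨?_, ⟨0, zero_mem (aSubmodule (a.I e)), aMap_zero⟩, ?_, ?_, ?_⟩
  · rintro _ ⟨F, hF, rfl⟩
    exact hg.aPhiRing_mem he hF
  · rintro _ ⟨F, hF, rfl⟩ _ ⟨K, hK, rfl⟩
    exact ⟨F + K, (aSubmodule (a.I e)).add_mem hF hK, hg.aPhiRing_add he hF hK⟩
  · rintro _ ⟨F, hF, rfl⟩
    exact ⟨-F, (aSubmodule (a.I e)).neg_mem hF, hg.aPhiRing_neg he hF⟩
  · rintro U hU _ ⟨F, hF, rfl⟩
    exact ⟨hg.aMul_aPhiRing_mem_image he hU hF, hg.aPhiRing_aMul_mem_image he hU hF⟩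

end Unit

lemma aPhiRing_d_mem {g : G} {F : aHom C} (hF : F ∈ aIdealSet C a (𝒢.d g)) :
    aPhiRing gd.ι gd.φ (𝒢.d g) F ∈ aIdealSet T gd.b (𝒢.inv g) := fun p =>
  hg.global.I_d_le_I_inv (hg.aPhiRing_mem (𝒢.d_mem_units g) hF p)

lemma aAct_aPhiRing_add {g : G} {F K : aHom C} (hF : F ∈ aIdealSet C a (𝒢.d g))
    (hK : K ∈ aIdealSet C a (𝒢.d g)) :
    aAct gd.b g (aPhiRing gd.ι gd.φ (𝒢.d g) (F + K)) =
      aAct gd.b g (aPhiRing gd.ι gd.φ (𝒢.d g) F) +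
        aAct gd.b g (aPhiRing gd.ι gd.φ (𝒢.d g) K) := by
  rw [hg.aPhiRing_add (𝒢.d_mem_units g) hF hK,
    hg.partialAction.aAct_add (hg.aPhiRing_d_mem hF) (hg.aPhiRing_d_mem hK)]

theorem aAct_aPhiRing (hpa : IsSemicatPartialAction 𝒢 C a) {g : G} {F : aHom C}
    (hF : F ∈ aIdealSet C a (𝒢.inv g)) :
    aAct gd.b g (aPhiRing gd.ι gd.φ (𝒢.d g) F) =
      aPhiRing gd.ι gd.φ (𝒢.r g) (aAct a g F) := by
  have hdu := 𝒢.d_mem_units g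
  have hru := 𝒢.r_mem_units g
  rw [aAct_eq_aMap, aPhiRing_eq_aMap,
    aMap_aMap (fun p => hg.φ_zero hdu p.1 p.2)
      (fun _ _ hv _ hw => hg.partialAction.act_add hv hw)
      (fun p => hg.global.I_d_le_I_inv (hg.φ_mem hdu (hpa.I_inv_le_I_d (hF p)))),
    aPhiRing_eq_aMap, aAct_eq_aMap,
    aMap_aMap (fun p => hpa.act_zero g p.1 p.2) (fun _ _ hv _ hw => hg.φ_add hru hv hw)
      (fun p => hpa.I_le_I_r (hpa.act_mem (hF p)))]
  refine Finset.sum_congr rfl fun p hp => ?_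
  obtain ⟨h1, h2⟩ := hpa.mem_D₀_of_mem_I (hF p) (DFinsupp.mem_support_iff.mp hp)
  exact single_eq_of_heq (Prod.ext (hg.ι_act₀ h1).symm (hg.ι_act₀ h2).symm) (hg.act_φ (hF p))

section ImageCondition

variable (hpa : IsSemicatPartialAction 𝒢 C a)
include hpa

lemma act₀_ι_act₀_inv {g : G} {x : Ob} (hx : x ∈ a.D₀ g) :
    gd.b.act₀ g (gd.ι (a.act₀ (𝒢.inv g) x)) = gd.ι x := by
  rw [← hg.ι_act₀ (hpa.act₀_inv_mem hx), hpa.act₀_act₀_inv hx]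

lemma ι_mem_D₀_inv {g : G} {x : Ob} (hx : x ∈ a.D₀ (𝒢.inv g)) :
    gd.ι x ∈ gd.b.D₀ (𝒢.inv g) := by
  have hx' : x ∈ a.D₀ (𝒢.d g) := by simpa only [𝒢.r_inv] using hpa.D₀_subset_D₀_r _ hx
  exact hg.global.D₀_d_subset_D₀_inv g
    ((hg.mem_D₀_iff_of_mem_units (𝒢.d_mem_units g) x).mp hx')

lemma aPhiRing_single_mem_image {g : G} {y x : Ob} (hy : y ∈ a.D₀ g) (hx : x ∈ a.D₀ g)
    {v : C.Hom y x} (hv : v ∈ a.I g y x) :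
    aPhiRing gd.ι gd.φ (𝒢.r g) (DFinsupp.single (y, x) v) ∈
      (fun F => aAct gd.b g (aPhiRing gd.ι gd.φ (𝒢.d g) F)) '' aIdealSet C a (𝒢.d g) := by
  obtain ⟨-, f', hf', hfv⟩ := (hg.φ_mem_iff hy hx _).mp ⟨v, hv, rfl⟩
  refine ⟨DFinsupp.single (a.act₀ (𝒢.inv g) y, a.act₀ (𝒢.inv g) x) f',
    single_mem_aSubmodule hf', ?_⟩
  beta_reduce
  rw [hg.aPhiRing_single (𝒢.d_mem_units g), hg.partialAction.aAct_single,
    hg.aPhiRing_single (𝒢.r_mem_units g)]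
  exact single_eq_of_heq
    (Prod.ext (hg.act₀_ι_act₀_inv hpa hy) (hg.act₀_ι_act₀_inv hpa hx)) hfv

lemma image_aPhiRing_subset (g : G) :
    aPhiRing gd.ι gd.φ (𝒢.r g) '' aIdealSet C a g ⊆
      aAct gd.b g '' (aPhiRing gd.ι gd.φ (𝒢.d g) '' aIdealSet C a (𝒢.d g)) := by
  rintro _ ⟨F, hF, rfl⟩
  rw [Set.image_image, ← DFinsupp.sum_single (f := F), DFinsupp.sum,
    hg.aPhiRing_sum (𝒢.r_mem_units g) _ fun p _ => single_mem_aSubmodule (hpa.I_le_I_r (hF p))]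
  refine Finset.sum_mem_image_of_map_add (S := (aSubmodule (a.I (𝒢.d g))).toAddSubmonoid)
    (by rw [aPhiRing_eq_aMap, aMap_zero, aAct_eq_aMap, aMap_zero])
    (fun _ hF _ hK => hg.aAct_aPhiRing_add hF hK) _ fun p hp => ?_
  obtain ⟨h1, h2⟩ := hpa.mem_D₀_of_mem_I (hF p) (DFinsupp.mem_support_iff.mp hp)
  exact hg.aPhiRing_single_mem_image hpa h1 h2 (hF p)

lemma mem_D₀_of_aAct_aPhiRing_apply_ne_zero {g : G} {F : aHom C}
    (hF : F ∈ aIdealSet C a (𝒢.d g)) {y x : Ob}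
    (h0 : aAct gd.b g (aPhiRing gd.ι gd.φ (𝒢.d g) F) (gd.ι y, gd.ι x) ≠ 0) :
    y ∈ a.D₀ g ∧ x ∈ a.D₀ g := by
  have hpb := hg.partialAction
  obtain ⟨hy, hx⟩ :=
    hpb.mem_D₀_of_mem_I (hpb.aAct_mem (hg.aPhiRing_d_mem hF) (gd.ι y, gd.ι x)) h0
  obtain ⟨_, hr, hry⟩ := exists_mem_support_of_aMap_apply_ne_zero h0
  obtain ⟨q, hq, rfl⟩ :=
    exists_mem_support_of_aMap_apply_ne_zero (DFinsupp.mem_support_iff.mp hr)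
  obtain ⟨hq1, hq2⟩ := hpa.mem_D₀_of_mem_I (hF q) (DFinsupp.mem_support_iff.mp hq)
  obtain ⟨e1, e2⟩ := Prod.mk.inj hry
  have hdu := 𝒢.d_mem_units g
  exact ⟨hg.mem_D₀_of_act₀ (hpb.D₀_subset_D₀_r g hy)
      ((hg.mem_D₀_iff_of_mem_units hdu _).mp hq1) e1,
    hg.mem_D₀_of_act₀ (hpb.D₀_subset_D₀_r g hx)
      ((hg.mem_D₀_iff_of_mem_units hdu _).mp hq2) e2⟩

lemma aAct_aPhiRing_apply {g : G} {F : aHom C} (hF : F ∈ aIdealSet C a (𝒢.d g)) {y x : Ob}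
    (hy : y ∈ a.D₀ g) (hx : x ∈ a.D₀ g) :
    HEq (aAct gd.b g (aPhiRing gd.ι gd.φ (𝒢.d g) F) (gd.ι y, gd.ι x))
      (gd.b.act g (gd.φ (𝒢.d g) (F (a.act₀ (𝒢.inv g) y, a.act₀ (𝒢.inv g) x)))) := by
  have hyx : ((gd.ι y, gd.ι x) : Ob' × Ob') = (gd.b.act₀ g (gd.ι (a.act₀ (𝒢.inv g) y)),
      gd.b.act₀ g (gd.ι (a.act₀ (𝒢.inv g) x))) := by
    rw [hg.act₀_ι_act₀_inv hpa hy, hg.act₀_ι_act₀_inv hpa hx]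
  refine (heq_apply _ hyx).trans (heq_of_eq ?_)
  rw [hg.partialAction.aAct_apply (hg.aPhiRing_d_mem hF)
    (hg.ι_mem_D₀_inv hpa (hpa.act₀_inv_mem hy))
    (hg.ι_mem_D₀_inv hpa (hpa.act₀_inv_mem hx)),
    hg.aPhiRing_apply (𝒢.d_mem_units g)]

lemma mem_of_aPhiRing_eq_aAct_aPhiRing {g : G} {F₀ F₁ : aHom C}
    (hF₀ : F₀ ∈ aIdealSet C a (𝒢.r g)) (hF₁ : F₁ ∈ aIdealSet C a (𝒢.d g))
    (h : aAct gd.b g (aPhiRing gd.ι gd.φ (𝒢.d g) F₁) =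
      aPhiRing gd.ι gd.φ (𝒢.r g) F₀) :
    F₀ ∈ aIdealSet C a g := by
  rintro ⟨y, x⟩
  by_cases h0 : F₀ (y, x) = 0
  · rw [h0]; exact zero_mem _
  have hru := 𝒢.r_mem_units g
  have hval : aAct gd.b g (aPhiRing gd.ι gd.φ (𝒢.d g) F₁) (gd.ι y, gd.ι x) =
      gd.φ (𝒢.r g) (F₀ (y, x)) := by
    rw [h, hg.aPhiRing_apply hru F₀ y x]
  have hne : gd.φ (𝒢.r g) (F₀ (y, x)) ≠ 0 := fun h' =>
    h0 (hg.φ_injOn hru (hF₀ (y, x)) (zero_mem _) (h'.trans (hg.φ_zero hru y x).symm))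
  obtain ⟨hy, hx⟩ := hg.mem_D₀_of_aAct_aPhiRing_apply_ne_zero hpa hF₁ (hval ▸ hne)
  obtain ⟨f, hf, hφf⟩ := (hg.φ_mem_iff hy hx _).mpr
    ⟨⟨F₀ (y, x), hF₀ (y, x), rfl⟩, _,
    hF₁ (a.act₀ (𝒢.inv g) y, a.act₀ (𝒢.inv g) x),
    (hg.aAct_aPhiRing_apply hpa hF₁ hy hx).symm.trans (heq_of_eq hval)⟩
  rwa [← hg.φ_injOn hru (hpa.I_le_I_r hf) (hF₀ (y, x)) hφf]

theorem image_aPhiRing (g : G) :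
    aPhiRing gd.ι gd.φ (𝒢.r g) '' aIdealSet C a g =
      aPhiRing gd.ι gd.φ (𝒢.r g) '' aIdealSet C a (𝒢.r g) ∩
        aAct gd.b g '' (aPhiRing gd.ι gd.φ (𝒢.d g) '' aIdealSet C a (𝒢.d g)) := by
  refine subset_antisymm ?_ ?_
  · rintro _ ⟨F, hF, rfl⟩
    exact ⟨⟨F, fun p => hpa.I_le_I_r (hF p), rfl⟩,
      hg.image_aPhiRing_subset hpa g ⟨F, hF, rfl⟩⟩
  · rintro _ ⟨⟨F₀, hF₀, rfl⟩, _, ⟨F₁, hF₁, rfl⟩, h⟩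
    exact ⟨F₀, hg.mem_of_aPhiRing_eq_aAct_aPhiRing hpa hF₀ hF₁ h, rfl⟩

end ImageCondition

lemma single_mem_closure {g : G} {y x : Ob'} (hy : y ∈ gd.b.D₀ g) (hx : x ∈ gd.b.D₀ g)
    {m : T.Hom y x} (hm : m ∈ gd.b.I g y x) :
    DFinsupp.single (y, x) m ∈
      AddSubgroup.closure {k : aHom T | ∃ h : G, 𝒢.r h = 𝒢.r g ∧
      ∃ F ∈ aIdealSet C a (𝒢.d h), k = aAct gd.b h (aPhiRing gd.ι gd.φ (𝒢.d h) F)} := by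
  have hpb := hg.partialAction
  rw [hg.I_eq_span] at hm
  induction hm using Submodule.closure_induction with
  | zero => rw [DFinsupp.single_zero]; exact zero_mem _
  | add _ _ _ _ hm hm' => rw [DFinsupp.single_add]; exact add_mem hm hm'
  | smul_mem c m hm =>
    obtain ⟨h, hrh, y', x', f, hf, hy', hx', hfm⟩ := hm
    have hdu := 𝒢.d_mem_units h
    have hφf := hg.global.I_d_le_I_inv (hg.φ_mem hdu hf)
    have hyx : ((gd.b.act₀ h (gd.ι y'), gd.b.act₀ h (gd.ι x')) : Ob' × Ob') = (y, x) := by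
      rw [hy', hx', hpb.act₀_act₀_inv (hg.global.D₀_congr hpb hrh.symm hy),
        hpb.act₀_act₀_inv (hg.global.D₀_congr hpb hrh.symm hx)]
    refine AddSubgroup.subset_closure ⟨h, hrh, DFinsupp.single (y', x') (c • f),
      single_mem_aSubmodule (Submodule.smul_mem _ c hf), ?_⟩
    rw [hg.aPhiRing_single hdu, hpb.aAct_single, hg.φ_smul hdu c hf, hpb.act_smul c hφf]
    exact single_eq_of_heq hyx.symm (heq_smul (X := fun p : Ob' × Ob' => T.Hom p.1 p.2)
      hyx.symm c hfm.symm)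

theorem mem_aIdealSet_iff_mem_closure (g : G) (k : aHom T) :
    k ∈ aIdealSet T gd.b g ↔
      k ∈ AddSubgroup.closure {m : aHom T | ∃ h : G, 𝒢.r h = 𝒢.r g ∧
      ∃ F ∈ aIdealSet C a (𝒢.d h), m = aAct gd.b h (aPhiRing gd.ι gd.φ (𝒢.d h) F)} := by
  have hpb := hg.partialAction
  refine ⟨fun hk => ?_, fun hk => ?_⟩
  · rw [← DFinsupp.sum_single (f := k)]
    refine sum_mem fun p hp => ?_
    obtain ⟨hy, hx⟩ := hpb.mem_D₀_of_mem_I (hk p) (DFinsupp.mem_support_iff.mp hp)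
    exact hg.single_mem_closure hy hx (hk p)
  · refine (AddSubgroup.closure_le (K := (aSubmodule (gd.b.I g)).toAddSubgroup)).mpr ?_ hk
    rintro _ ⟨h, hrh, F, hF, rfl⟩ p
    exact hg.global.I_congr hpb hrh (hpb.aAct_mem (hg.aPhiRing_d_mem hF) p)

end IsGlobalization

theorem stmt15_general {R : Type u} [CommRing R] {G : Type u₂} {Ob : Type v} {Ob' : Type v'}
    (𝒢 : AlgGroupoid G) (C : RSemicat.{u, v, w} R Ob) (T : RSemicat.{u, v', w'} R Ob')
    (a : SemicatActionData R G C) (gd : GlobalizationData R G C T)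
    (hpa : IsSemicatPartialAction 𝒢 C a)
    (hg : IsGlobalization 𝒢 C a T gd) :
    IsRingGlobalization 𝒢
      (aMul C) (fun g => aIdealSet C a g) (fun g => aAct a g)
      (aMul T) (fun g => aIdealSet T gd.b g) (fun g => aAct gd.b g)
      (fun e => aPhiRing gd.ι gd.φ e) :=
  ⟨hg.partialAction.isRingPartialAction, hg.global.ringActionIsGlobal hg.partialAction,
    fun _ he => ⟨fun _ hF => hg.aPhiRing_mem he hF, fun _ hF _ hK => hg.aPhiRing_add he hF hK,
      fun _ hF _ hK => hg.aPhiRing_aMul he hpa hF hK,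
      fun _ hF _ hK h => hg.aPhiRing_injOn he hF hK h, hg.isRingIdealPair_image_aPhiRing he⟩,
    hg.image_aPhiRing hpa, fun _ _ hF => hg.aAct_aPhiRing hpa hF,
    hg.mem_aIdealSet_iff_mem_closure⟩

/-- Let `C` and `T` be `R`-categories carrying partial
actions `α` and `β` of a groupoid `𝒢` such that `(T, β)` is a globalization
of `(C, α)` with structural faithful semifunctors `φ_e`. Then the induced
global action `β_{a(T)}` of `𝒢` on the ring `a(T)` is a globalization (in
the ring sense) of the induced partial action `α_{a(C)}` on `a(C)`, via the
ring monomorphisms `ψ_e : a(C)_e → a(T)_e` induced by the `φ_e`. -/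
theorem stmt15 {R : Type u} [CommRing R] {G : Type u₂} {Ob : Type v} {Ob' : Type v'}
    (𝒢 : AlgGroupoid G) (C : RSemicat.{u, v, w} R Ob) (T : RSemicat.{u, v', w'} R Ob')
    (a : SemicatActionData R G C) (gd : GlobalizationData R G C T)
    (hC : C.HasIdentities) (hT : T.HasIdentities)
    (hpa : IsSemicatPartialAction 𝒢 C a)
    (hg : IsGlobalization 𝒢 C a T gd) :
    IsRingGlobalization 𝒢
      (aMul C) (fun g => aIdealSet C a g) (fun g => aAct a g)
      (aMul T) (fun g => aIdealSet T gd.b g) (fun g => aAct gd.b g)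
      (fun e => aPhiRing gd.ι gd.φ e) :=
  stmt15_general 𝒢 C T a gd hpa hg
end
end

section
/- Let 𝒢 be a groupoid with 𝒢₀ finite and let B be a 𝒢-graded R-category. Then the R-semicategories B⊗𝒢 and B#𝒢 are R-categories. Explicitly, writing 1_x = Σ_{u∈𝒢₀} 1_x^u for the homogeneous decomposition of the identity of x ∈ B₀, the component 1_x^e is the identity morphism of the object (x,e) of B⊗𝒢, and the component 1_x^{d(s)} is the identity morphism of the object (x,s) of B#𝒢. -/
open scoped Classical

noncomputable section

universe u u₂ v v' w w'

variable {R : Type u} [CommRing R] {G : Type u₂} {Ob : Type v}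

/-!
If `h` is homogeneous of degree `g`, then `h = h ∘ 1_x = Σ_u h ∘ 1_x^u`, where `h ∘ 1_x^u` has
degree `g u` (or vanishes when `g, u` are not composable). Comparing the components of degree `g`,
and using that `g u = g` forces `u = d g`, gives `h ∘ 1_x^{d g} = h`; symmetrically
`1_x^{r g} ∘ h = h`. Morphisms of `B ⊗ 𝒢` out of `(x, e)` are sums of homogeneous ones of degrees
`g` with `d g = e`, and those of `B # 𝒢` out of `(x, s)` are homogeneous of degree `t⁻¹ s`, with
`d (t⁻¹ s) = d s`; dually for morphisms into these objects.
-/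

namespace AlgGroupoid

variable {G : Type u₂} (𝒢 : AlgGroupoid G)

theorem mul_d (g : G) : 𝒢.mul g (𝒢.d g) = g := by
  simpa only [d, 𝒢.inv_inv'] using 𝒢.inv_mul_cancel' (𝒢.inv g) g (𝒢.comp_inv_left g)

theorem r_mul (g : G) : 𝒢.mul (𝒢.r g) g = g := by
  rw [r, 𝒢.mul_assoc' g (𝒢.inv g) g (𝒢.comp_inv_right g) (𝒢.comp_inv_left g)]
  exact 𝒢.mul_d g

theorem eq_d_of_mul_eq {g u : G} (hc : 𝒢.comp g u) (h : 𝒢.mul g u = g) : u = 𝒢.d g := by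
  simpa only [h, d] using (𝒢.inv_mul_cancel' g u hc).symm

theorem eq_r_of_mul_eq {g u : G} (hc : 𝒢.comp u g) (h : 𝒢.mul u g = g) : u = 𝒢.r g := by
  simpa only [h, r] using (𝒢.mul_inv_cancel' u g hc).symm

theorem comp_inv_of_r_eq {s t : G} (h : 𝒢.r s = 𝒢.r t) : 𝒢.comp (𝒢.inv s) t := by
  rw [𝒢.comp_iff, 𝒢.inv_inv']
  exact h

theorem inv_mul_mul_inv_mul {s t : G} (h : 𝒢.r t = 𝒢.r s) :
    𝒢.mul (𝒢.mul (𝒢.inv s) t) (𝒢.mul (𝒢.inv t) s) = 𝒢.d s := by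
  have hts : 𝒢.comp (𝒢.inv t) s := 𝒢.comp_inv_of_r_eq h
  have hs : 𝒢.mul t (𝒢.mul (𝒢.inv t) s) = s := by
    rw [← 𝒢.mul_assoc' t (𝒢.inv t) s (𝒢.comp_inv_right t) hts]
    exact (congrArg (𝒢.mul · s) h).trans (𝒢.r_mul s)
  rw [𝒢.mul_assoc' (𝒢.inv s) t _ (𝒢.comp_inv_of_r_eq h.symm)
    (𝒢.comp_mul_right t (𝒢.inv t) s (𝒢.comp_inv_right t) hts), hs]
  rfl

theorem d_inv_mul {s t : G} (h : 𝒢.r t = 𝒢.r s) : 𝒢.d (𝒢.mul (𝒢.inv t) s) = 𝒢.d s := by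
  rw [d, 𝒢.inv_mul' _ _ (𝒢.comp_inv_of_r_eq h), 𝒢.inv_inv']
  exact 𝒢.inv_mul_mul_inv_mul h

theorem r_inv_mul {s t : G} (h : 𝒢.r t = 𝒢.r s) : 𝒢.r (𝒢.mul (𝒢.inv s) t) = 𝒢.d s := by
  rw [r, 𝒢.inv_mul' _ _ (𝒢.comp_inv_of_r_eq h.symm), 𝒢.inv_inv']
  exact 𝒢.inv_mul_mul_inv_mul h

end AlgGroupoid

theorem DirectSum.IsInternal.sum_filter_eq_of_mem {R ι κ M : Type*} [Semiring R] [DecidableEq ι]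
    [AddCommMonoid M] [Module R M] {ℳ : ι → Submodule R M} (hℳ : DirectSum.IsInternal ℳ)
    {x : M} {i : ι} (hx : x ∈ ℳ i) {s : Finset κ} {v : κ → M} {k : κ → ι}
    (hv : ∀ j, v j ∈ ℳ (k j)) (hsum : ∑ j ∈ s, v j = x) :
    ∑ j ∈ s with k j = i, v j = x := by
  let := hℳ.chooseDecomposition
  have hi := congrArg (fun m => (DirectSum.decompose ℳ m i : M)) hsum
  rw [DirectSum.decompose_sum, DFinsupp.finsetSum_apply, Submodule.coe_sum,
    DirectSum.decompose_of_mem_same ℳ hx] at hi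
  rw [← hi, Finset.sum_filter]
  refine Finset.sum_congr rfl fun j _ => ?_
  split_ifs with hj
  · exact (DirectSum.decompose_of_mem_same ℳ (hj ▸ hv j)).symm
  · exact (DirectSum.decompose_of_mem_ne ℳ (hv j) hj).symm

namespace RSemicat

variable {R : Type u} [CommRing R] {Ob : Type v} (C : RSemicat.{u, v, w} R Ob)

def precomp {y x : Ob} (u : C.Hom y x) (z : Ob) : C.Hom z y →ₗ[R] C.Hom z x where
  toFun f := C.comp f u
  map_add' f f' := C.comp_add_left f f' u
  map_smul' a f := C.comp_smul_left a f u

def postcomp {z y : Ob} (f : C.Hom z y) (x : Ob) : C.Hom y x →ₗ[R] C.Hom z x where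
  toFun u := C.comp f u
  map_add' u u' := C.comp_add_right f u u'
  map_smul' a u := C.comp_smul_right a f u

end RSemicat

namespace IsGrading

variable {R : Type u} [CommRing R] {G : Type u₂} {Ob : Type v} {𝒢 : AlgGroupoid G}
  {B : RSemicat.{u, v, w} R Ob} {deco : ∀ y x : Ob, G → Submodule R (B.Hom y x)}

theorem comp_mem_mul (hgr : IsGrading 𝒢 B deco) {z y x : Ob} {t s : G} {f : B.Hom z y}
    {f' : B.Hom y x} (hf : f ∈ deco z y t) (hf' : f' ∈ deco y x s) :
    B.comp f f' ∈ deco z x (𝒢.mul t s) := by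
  by_cases hts : 𝒢.comp t s
  · exact hgr.2.1 z y x t s hts f hf f' hf'
  · rw [hgr.2.2 z y x t s hts f hf f' hf']
    exact zero_mem _

theorem comp_apply_d_eq_self (hgr : IsGrading 𝒢 B deco) {x y : Ob} (c : G →₀ B.Hom x x)
    (hc : ∀ u, c u ∈ deco x x u) {g : G} {h : B.Hom y x} (hh : h ∈ deco y x g)
    (hsum : B.comp h (c.sum fun _ v => v) = h) : B.comp h (c (𝒢.d g)) = h := by
  classical
  have hexpand : ∑ u ∈ c.support, B.comp h (c u) = h :=
    (map_finsuppSum (B.postcomp h x) c fun (_ : G) (v : B.Hom x x) => v).symm.trans hsum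
  refine Eq.trans ?_
    ((hgr.1 y x).sum_filter_eq_of_mem hh (fun u => hgr.comp_mem_mul hh (hc u)) hexpand)
  rw [Finset.sum_eq_single (𝒢.d g)]
  · intro u hu hud
    by_cases hgu : 𝒢.comp g u
    · exact absurd (𝒢.eq_d_of_mul_eq hgu (Finset.mem_filter.1 hu).2) hud
    · exact hgr.2.2 y x x g u hgu h hh (c u) (hc u)
  · intro hd
    have hcd : c (𝒢.d g) = 0 := by
      simpa [𝒢.mul_d g] using hd
    rw [hcd, B.comp_zero_right]

theorem apply_r_comp_eq_self (hgr : IsGrading 𝒢 B deco) {x y : Ob} (c : G →₀ B.Hom x x)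
    (hc : ∀ u, c u ∈ deco x x u) {g : G} {h : B.Hom x y} (hh : h ∈ deco x y g)
    (hsum : B.comp (c.sum fun _ v => v) h = h) : B.comp (c (𝒢.r g)) h = h := by
  classical
  have hexpand : ∑ u ∈ c.support, B.comp (c u) h = h :=
    (map_finsuppSum (B.precomp h x) c fun (_ : G) (v : B.Hom x x) => v).symm.trans hsum
  refine Eq.trans ?_
    ((hgr.1 x y).sum_filter_eq_of_mem hh (fun u => hgr.comp_mem_mul (hc u) hh) hexpand)
  rw [Finset.sum_eq_single (𝒢.r g)]
  · intro u hu hur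
    by_cases hug : 𝒢.comp u g
    · exact absurd (𝒢.eq_r_of_mul_eq hug (Finset.mem_filter.1 hu).2) hur
    · exact hgr.2.2 x x y u g hug (c u) (hc u) h hh
  · intro hr
    have hcr : c (𝒢.r g) = 0 := by
      simpa [𝒢.r_mul g] using hr
    rw [hcr, B.comp_zero_left]

end IsGrading

theorem stmt17_general {R : Type u} [CommRing R] {G : Type u₂} {Ob : Type v}
    (𝒢 : AlgGroupoid G)
    (B : RSemicat.{u, v, w} R Ob)
    (deco : ∀ y x : Ob, G → Submodule R (B.Hom y x))
    (hgr : IsGrading 𝒢 B deco)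
    (ident : ∀ x : Ob, B.Hom x x)
    (hident : ∀ x : Ob,
      (∀ (y : Ob) (f : B.Hom x y), B.comp (ident x) f = f) ∧
      (∀ (y : Ob) (f : B.Hom y x), B.comp f (ident x) = f)) :
    ∀ (x : Ob) (c : G →₀ B.Hom x x),
      (∀ g : G, c g ∈ deco x x g) → (c.sum fun _ v => v) = ident x →
      -- `1_x^e` is the identity morphism of the object `(x, e)` of `B ⊗ 𝒢`
      ((∀ e ∈ 𝒢.units, ∀ (y : Ob), ∀ f ∈ 𝒢.units,
        (∀ h : B.Hom y x, h ∈ (⨆ g ∈ {g : G | 𝒢.d g = e ∧ 𝒢.r g = f}, deco y x g) →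
          B.comp h (c e) = h) ∧
        (∀ h : B.Hom x y, h ∈ (⨆ g ∈ {g : G | 𝒢.d g = f ∧ 𝒢.r g = e}, deco x y g) →
          B.comp (c e) h = h)) ∧
      -- `1_x^{d s}` is the identity morphism of the object `(x, s)` of `B # 𝒢`
      (∀ (s : G) (y : Ob) (t : G), 𝒢.r t = 𝒢.r s →
        (∀ h ∈ deco y x (𝒢.mul (𝒢.inv t) s), B.comp h (c (𝒢.d s)) = h) ∧
        (∀ h ∈ deco x y (𝒢.mul (𝒢.inv s) t), B.comp (c (𝒢.d s)) h = h))) := by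
  intro x c hc hsum
  have hright {y : Ob} {g : G} {h : B.Hom y x} (hh : h ∈ deco y x g) :
      B.comp h (c (𝒢.d g)) = h :=
    hgr.comp_apply_d_eq_self c hc hh (hsum ▸ (hident x).2 y h)
  have hleft {y : Ob} {g : G} {h : B.Hom x y} (hh : h ∈ deco x y g) :
      B.comp (c (𝒢.r g)) h = h :=
    hgr.apply_r_comp_eq_self c hc hh (hsum ▸ (hident x).1 y h)
  refine ⟨fun e _ y f _ => ⟨fun h hh => ?_, fun h hh => ?_⟩,
    fun s y t hrt => ⟨fun h hh => ?_, fun h hh => ?_⟩⟩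
  · refine (iSup₂_le (a := LinearMap.eqLocus (B.precomp (c e) y) LinearMap.id) ?_) hh
    rintro g ⟨rfl, -⟩ h' hh'
    exact hright hh'
  · refine (iSup₂_le (a := LinearMap.eqLocus (B.postcomp (c e) y) LinearMap.id) ?_) hh
    rintro g ⟨-, rfl⟩ h' hh'
    exact hleft hh'
  · simpa only [𝒢.d_inv_mul hrt] using hright hh
  · simpa only [𝒢.r_inv_mul hrt] using hleft hh

/-- Let `𝒢` be a groupoid with `𝒢₀` finite and `B` a
`𝒢`-graded `R`-category. Then `B ⊗ 𝒢` and `B # 𝒢` are `R`-categories: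
writing `1_x = Σ_{u ∈ 𝒢₀} 1_x^u` for the homogeneous decomposition of the
identity of `x`, the component `1_x^e` is the identity morphism of the
object `(x, e)` of `B ⊗ 𝒢`, and `1_x^{d s}` is the identity morphism of the
object `(x, s)` of `B # 𝒢`. -/
theorem stmt17 {R : Type u} [CommRing R] {G : Type u₂} {Ob : Type v}
    (𝒢 : AlgGroupoid G) (hfin : (𝒢.units).Finite)
    (B : RSemicat.{u, v, w} R Ob)
    (deco : ∀ y x : Ob, G → Submodule R (B.Hom y x))
    (hgr : IsGrading 𝒢 B deco)
    (ident : ∀ x : Ob, B.Hom x x)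
    (hident : ∀ x : Ob,
      (∀ (y : Ob) (f : B.Hom x y), B.comp (ident x) f = f) ∧
      (∀ (y : Ob) (f : B.Hom y x), B.comp f (ident x) = f)) :
    ∀ (x : Ob) (c : G →₀ B.Hom x x),
      (∀ g : G, c g ∈ deco x x g) → (c.sum fun _ v => v) = ident x →
      -- `1_x^e` is the identity morphism of the object `(x, e)` of `B ⊗ 𝒢`
      ((∀ e ∈ 𝒢.units, ∀ (y : Ob), ∀ f ∈ 𝒢.units,
        (∀ h : B.Hom y x, h ∈ (⨆ g ∈ {g : G | 𝒢.d g = e ∧ 𝒢.r g = f}, deco y x g) →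
          B.comp h (c e) = h) ∧
        (∀ h : B.Hom x y, h ∈ (⨆ g ∈ {g : G | 𝒢.d g = f ∧ 𝒢.r g = e}, deco x y g) →
          B.comp (c e) h = h)) ∧
      -- `1_x^{d s}` is the identity morphism of the object `(x, s)` of `B # 𝒢`
      (∀ (s : G) (y : Ob) (t : G), 𝒢.r t = 𝒢.r s →
        (∀ h ∈ deco y x (𝒢.mul (𝒢.inv t) s), B.comp h (c (𝒢.d s)) = h) ∧
        (∀ h ∈ deco x y (𝒢.mul (𝒢.inv s) t), B.comp (c (𝒢.d s)) h = h))) :=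
  stmt17_general 𝒢 B deco hgr ident hident
end
end
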